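/- arXiv:2010.02870 — 8 statements merged into one kernel-verified Lean document; each statement's English description precedes it below -/
import Mathlib

section
/- Let w ∈ ℝ^M be fixed. Then ‖ E_{(t,ω)}[ (I − α ∇²J_t(w)) ∇J_t(w − α ∇J_t(w)) ] − E_{(t,ω)}[ (I − α H(t,ω)) ∇J_t(w − α g(t,ω)) ] ‖ ≤ (1 + αL)·αL·σ_G/√N + B·α·σ_H/√N. (This is the paper's Lemma 2, the gradient perturbation bound between the MAML gradient and the gradient of the adjusted objective.) -/
open MeasureTheory ProbabilityTheory

/-- **Gradient perturbation bound (Lemma 2 of Dif-MAML).**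
The disagreement between the MAML gradient and the gradient of the adjusted objective is
bounded by `(1+αL)·αL·σ_G/√N + B·α·σ_H/√N`. -/
theorem gradient_perturbation_bound
    (M : ℕ) (α L B σG σH : ℝ) (N : ℕ)
    (hα : 0 < α) (hL : 0 < L) (hB : 0 < B) (hσG : 0 < σG) (hσH : 0 < σH) (hN : 1 ≤ N)
    {T Ω : Type*} [MeasurableSpace T] [MeasurableSpace Ω]
    (π : Measure T) (P : Measure Ω) [IsProbabilityMeasure π] [IsProbabilityMeasure P]
    (J : T → EuclideanSpace ℝ (Fin M) → ℝ)
    (hdiff : ∀ t, Differentiable ℝ (J t))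
    (hdiff2 : ∀ t, Differentiable ℝ (gradient (J t)))
    (hlip : ∀ t u v, ‖gradient (J t) u - gradient (J t) v‖ ≤ L * ‖u - v‖)
    (hhess : ∀ t u, ‖fderiv ℝ (gradient (J t)) u‖ ≤ L)
    (hbound : ∀ t u, ‖gradient (J t) u‖ ≤ B)
    (w : EuclideanSpace ℝ (Fin M))
    (g : T × Ω → EuclideanSpace ℝ (Fin M))
    (H : T × Ω → EuclideanSpace ℝ (Fin M) →L[ℝ] EuclideanSpace ℝ (Fin M))
    (hgmeas : Measurable g) (hHmeas : StronglyMeasurable H)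
    (hgmom : ∀ t, ∫ ω, ‖g (t, ω) - gradient (J t) w‖ ∂P ≤ σG / Real.sqrt (N : ℝ))
    (hHmom : ∀ t, ∫ ω, ‖H (t, ω) - fderiv ℝ (gradient (J t)) w‖ ∂P ≤ σH / Real.sqrt (N : ℝ))
    (hgmom_int : ∀ t, Integrable (fun ω => ‖g (t, ω) - gradient (J t) w‖) P)
    (hHmom_int : ∀ t, Integrable (fun ω => ‖H (t, ω) - fderiv ℝ (gradient (J t)) w‖) P)
    (hint1 : Integrable (fun p : T × Ω =>
      (ContinuousLinearMap.id ℝ (EuclideanSpace ℝ (Fin M)) - α • fderiv ℝ (gradient (J p.1)) w)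
        (gradient (J p.1) (w - α • gradient (J p.1) w))) (π.prod P))
    (hint2 : Integrable (fun p : T × Ω =>
      (ContinuousLinearMap.id ℝ (EuclideanSpace ℝ (Fin M)) - α • H p)
        (gradient (J p.1) (w - α • g p))) (π.prod P)) :
    ‖(∫ p : T × Ω,
        (ContinuousLinearMap.id ℝ (EuclideanSpace ℝ (Fin M)) - α • fderiv ℝ (gradient (J p.1)) w)
          (gradient (J p.1) (w - α • gradient (J p.1) w)) ∂(π.prod P))
      - ∫ p : T × Ω,
        (ContinuousLinearMap.id ℝ (EuclideanSpace ℝ (Fin M)) - α • H p)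
          (gradient (J p.1) (w - α • g p)) ∂(π.prod P)‖
      ≤ (1 + α * L) * (α * L * σG / Real.sqrt (N : ℝ))
        + B * α * σH / Real.sqrt (N : ℝ) := by
  set F : T × Ω → EuclideanSpace ℝ (Fin M) := fun p =>
      (ContinuousLinearMap.id ℝ (EuclideanSpace ℝ (Fin M)) - α • fderiv ℝ (gradient (J p.1)) w)
        (gradient (J p.1) (w - α • gradient (J p.1) w)) with hF
  set G : T × Ω → EuclideanSpace ℝ (Fin M) := fun p =>
      (ContinuousLinearMap.id ℝ (EuclideanSpace ℝ (Fin M)) - α • H p)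
        (gradient (J p.1) (w - α • g p)) with hG
  have hFG : Integrable (fun p => F p - G p) (π.prod P) := hint1.sub hint2
  set C : ℝ := (1 + α * L) * (α * L * σG / Real.sqrt (N : ℝ))
        + B * α * σH / Real.sqrt (N : ℝ) with hC
  -- pointwise bound
  have hpt : ∀ p : T × Ω, ‖F p - G p‖ ≤
      (1 + α * L) * (α * L) * ‖g p - gradient (J p.1) w‖
      + B * α * ‖H p - fderiv ℝ (gradient (J p.1)) w‖ := by
    intro p
    set D := fderiv ℝ (gradient (J p.1)) w with hD
    set A := ContinuousLinearMap.id ℝ (EuclideanSpace ℝ (Fin M)) - α • D with hA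
    set u := gradient (J p.1) (w - α • gradient (J p.1) w) with hu
    set v := gradient (J p.1) (w - α • g p) with hv
    have hsplit : F p - G p = A (u - v) + (α • (H p - D)) v := by
      simp only [hF, hG, hA, map_sub, ContinuousLinearMap.sub_apply,
        ContinuousLinearMap.smul_apply, ContinuousLinearMap.id_apply, map_sub, smul_sub]
      abel
    have hAnorm : ‖A‖ ≤ 1 + α * L := by
      calc ‖A‖ ≤ ‖ContinuousLinearMap.id ℝ (EuclideanSpace ℝ (Fin M))‖ + ‖α • D‖ :=
            norm_sub_le _ _
        _ ≤ 1 + α * L := by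
            have hid : ‖ContinuousLinearMap.id ℝ (EuclideanSpace ℝ (Fin M))‖ ≤ 1 :=
              ContinuousLinearMap.norm_id_le
            have : ‖α • D‖ ≤ α * L := by
              rw [norm_smul, Real.norm_eq_abs, abs_of_pos hα]
              exact mul_le_mul_of_nonneg_left (hhess _ _) hα.le
            linarith
    have huv : ‖u - v‖ ≤ α * L * ‖g p - gradient (J p.1) w‖ := by
      have := hlip p.1 (w - α • gradient (J p.1) w) (w - α • g p)
      have heq : (w - α • gradient (J p.1) w) - (w - α • g p) = α • (g p - gradient (J p.1) w) := by
        rw [smul_sub]; abel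
      rw [heq] at this
      rw [norm_smul, Real.norm_eq_abs, abs_of_pos hα] at this
      calc ‖u - v‖ ≤ L * (α * ‖g p - gradient (J p.1) w‖) := this
        _ = α * L * ‖g p - gradient (J p.1) w‖ := by ring
    calc ‖F p - G p‖ ≤ ‖A (u - v)‖ + ‖(α • (H p - D)) v‖ := by
          rw [hsplit]; exact norm_add_le _ _
      _ ≤ ‖A‖ * ‖u - v‖ + ‖α • (H p - D)‖ * ‖v‖ := by
          gcongr <;> exact ContinuousLinearMap.le_opNorm _ _
      _ ≤ (1 + α * L) * (α * L * ‖g p - gradient (J p.1) w‖)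
            + (α * ‖H p - D‖) * B := by
          have h1 : ‖A‖ * ‖u - v‖ ≤ (1 + α * L) * (α * L * ‖g p - gradient (J p.1) w‖) :=
            mul_le_mul hAnorm huv (norm_nonneg _) (by positivity)
          have h2 : ‖α • (H p - D)‖ * ‖v‖ ≤ (α * ‖H p - D‖) * B := by
            have hs := norm_smul α (H p - D)
            rw [Real.norm_eq_abs, abs_of_pos hα] at hs
            rw [hs]
            exact mul_le_mul_of_nonneg_left (hbound _ _) (by positivity)
          linarith
      _ = (1 + α * L) * (α * L) * ‖g p - gradient (J p.1) w‖
            + B * α * ‖H p - D‖ := by ring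
  -- reduce to integral of the norm
  have step1 : ‖(∫ p, F p ∂(π.prod P)) - ∫ p, G p ∂(π.prod P)‖
      ≤ ∫ p, ‖F p - G p‖ ∂(π.prod P) := by
    rw [← integral_sub hint1 hint2]
    exact norm_integral_le_integral_norm _
  have hnormint : Integrable (fun p => ‖F p - G p‖) (π.prod P) := hFG.norm
  have step2 : ∫ p, ‖F p - G p‖ ∂(π.prod P)
      = ∫ t, ∫ ω, ‖F (t, ω) - G (t, ω)‖ ∂P ∂π := integral_prod _ hnormint
  have hinner : ∀ᵐ t ∂π, ∫ ω, ‖F (t, ω) - G (t, ω)‖ ∂P ≤ C := by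
    filter_upwards [hFG.prod_right_ae] with t ht
    have hbint : Integrable (fun ω =>
        (1 + α * L) * (α * L) * ‖g (t, ω) - gradient (J t) w‖
        + B * α * ‖H (t, ω) - fderiv ℝ (gradient (J t)) w‖) P :=
      ((hgmom_int t).const_mul _).add ((hHmom_int t).const_mul _)
    have h1 : ∫ ω, ‖F (t, ω) - G (t, ω)‖ ∂P
        ≤ ∫ ω, ((1 + α * L) * (α * L) * ‖g (t, ω) - gradient (J t) w‖
            + B * α * ‖H (t, ω) - fderiv ℝ (gradient (J t)) w‖) ∂P :=
      integral_mono ht.norm hbint (fun ω => hpt (t, ω))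
    have h2 : ∫ ω, ((1 + α * L) * (α * L) * ‖g (t, ω) - gradient (J t) w‖
            + B * α * ‖H (t, ω) - fderiv ℝ (gradient (J t)) w‖) ∂P
        = (1 + α * L) * (α * L) * ∫ ω, ‖g (t, ω) - gradient (J t) w‖ ∂P
          + B * α * ∫ ω, ‖H (t, ω) - fderiv ℝ (gradient (J t)) w‖ ∂P := by
      rw [integral_add ((hgmom_int t).const_mul _) ((hHmom_int t).const_mul _),
        integral_const_mul, integral_const_mul]
    have h3 : (1 + α * L) * (α * L) * ∫ ω, ‖g (t, ω) - gradient (J t) w‖ ∂P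
          + B * α * ∫ ω, ‖H (t, ω) - fderiv ℝ (gradient (J t)) w‖ ∂P ≤ C := by
      have e1 : (0:ℝ) ≤ (1 + α * L) * (α * L) := by positivity
      have e2 : (0:ℝ) ≤ B * α := by positivity
      have := mul_le_mul_of_nonneg_left (hgmom t) e1
      have := mul_le_mul_of_nonneg_left (hHmom t) e2
      rw [hC]
      have : (1 + α * L) * (α * L * σG / Real.sqrt (N : ℝ))
          = (1 + α * L) * (α * L) * (σG / Real.sqrt (N : ℝ)) := by ring
      rw [this]
      have : B * α * σH / Real.sqrt (N : ℝ) = B * α * (σH / Real.sqrt (N : ℝ)) := by ring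
      rw [this]
      exact add_le_add (mul_le_mul_of_nonneg_left (hgmom t) e1)
        (mul_le_mul_of_nonneg_left (hHmom t) e2)
    linarith [h1, h2.le, h3, h2.ge]
  have houter : Integrable (fun t => ∫ ω, ‖F (t, ω) - G (t, ω)‖ ∂P) π :=
    hFG.integral_norm_prod_left
  have step3 : ∫ t, ∫ ω, ‖F (t, ω) - G (t, ω)‖ ∂P ∂π ≤ C := by
    calc ∫ t, ∫ ω, ‖F (t, ω) - G (t, ω)‖ ∂P ∂π ≤ ∫ _t, C ∂π :=
          integral_mono_ae houter (integrable_const C) hinner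
      _ = C := by simp
  calc ‖(∫ p, F p ∂(π.prod P)) - ∫ p, G p ∂(π.prod P)‖
      ≤ ∫ p, ‖F p - G p‖ ∂(π.prod P) := step1
    _ = ∫ t, ∫ ω, ‖F (t, ω) - G (t, ω)‖ ∂P ∂π := step2
    _ ≤ C := step3
end

section
/- E ‖ (1/N) Σ_{n=1}^N r_n ‖⁴ ≤ 3σ⁴/N². (This is the paper's Appendix A.4 variance-reduction result for fourth-order central moments of mini-batch averages.) -/
/-!
Expand `‖∑ n, r n‖ ^ 4 = ∑ i j k l, ⟪r i, r j⟫ * ⟪r k, r l⟫`. A term in which one index differs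
from the other three has mean zero: that factor is centred and independent of the rest. In every
other term the four indices are matched in pairs, and there are at most `3 N²` such quadruples.
By AM-GM each term is bounded by the average of four fourth moments, hence by `σ⁴`.
-/

open MeasureTheory ProbabilityTheory Finset
open scoped RealInnerProductSpace

lemma mul_mul_mul_le_sum_pow_four (a b c d : ℝ) :
    a * b * c * d ≤ (a ^ 4 + b ^ 4 + c ^ 4 + d ^ 4) / 4 := by
  nlinarith [sq_nonneg (a * b - c * d), sq_nonneg (a ^ 2 - b ^ 2), sq_nonneg (c ^ 2 - d ^ 2)]

section InnerProductSpace

variable {E : Type*} [NormedAddCommGroup E] [InnerProductSpace ℝ E]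

lemma abs_inner_mul_inner_le (w x y z : E) :
    |⟪w, x⟫ * ⟪y, z⟫| ≤ (‖w‖ ^ 4 + ‖x‖ ^ 4 + ‖y‖ ^ 4 + ‖z‖ ^ 4) / 4 := by
  calc |⟪w, x⟫ * ⟪y, z⟫| = |⟪w, x⟫| * |⟪y, z⟫| := abs_mul _ _
    _ ≤ ‖w‖ * ‖x‖ * (‖y‖ * ‖z‖) := by
      gcongr <;> exact abs_real_inner_le_norm _ _
    _ ≤ _ := by
      rw [← mul_assoc]
      exact mul_mul_mul_le_sum_pow_four _ _ _ _

lemma norm_inner_smul_le (x y z : E) :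
    ‖⟪y, z⟫ • x‖ ≤ (‖x‖ ^ 4 + ‖y‖ ^ 4 + ‖z‖ ^ 4 + 1) / 4 := by
  calc ‖⟪y, z⟫ • x‖ = |⟪y, z⟫| * ‖x‖ := by rw [norm_smul, Real.norm_eq_abs]
    _ ≤ ‖y‖ * ‖z‖ * ‖x‖ := by gcongr; exact abs_real_inner_le_norm _ _
    _ = ‖x‖ * ‖y‖ * ‖z‖ * 1 := by ring
    _ ≤ (‖x‖ ^ 4 + ‖y‖ ^ 4 + ‖z‖ ^ 4 + 1 ^ 4) / 4 :=
      mul_mul_mul_le_sum_pow_four _ _ _ _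
    _ = _ := by rw [one_pow]

lemma norm_sum_pow_four {ι : Type*} (s : Finset ι) (x : ι → E) :
    ‖∑ i ∈ s, x i‖ ^ 4 = ∑ i ∈ s, ∑ j ∈ s, ∑ k ∈ s, ∑ l ∈ s, ⟪x i, x j⟫ * ⟪x k, x l⟫ := by
  have hsq : ‖∑ i ∈ s, x i‖ ^ 2 = ∑ i ∈ s, ∑ j ∈ s, ⟪x i, x j⟫ := by
    simp_rw [← real_inner_self_eq_norm_sq, sum_inner, inner_sum]
  rw [show ‖∑ i ∈ s, x i‖ ^ 4 = ‖∑ i ∈ s, x i‖ ^ 2 * ‖∑ i ∈ s, x i‖ ^ 2 by ring, hsq]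
  simp_rw [sum_mul, mul_sum]

end InnerProductSpace

section Combinatorics

variable {ι : Type*} [DecidableEq ι]

def pairingCount (i j k l : ι) : ℝ :=
  (if i = j then 1 else 0) * (if k = l then 1 else 0) +
    (if i = k then 1 else 0) * (if j = l then 1 else 0) +
    (if i = l then 1 else 0) * (if j = k then 1 else 0)

lemma pairingCount_nonneg (i j k l : ι) : 0 ≤ pairingCount i j k l := by
  unfold pairingCount; positivity

lemma one_le_pairingCount {i j k l : ι}
    (h : (i = j ∧ k = l) ∨ (i = k ∧ j = l) ∨ (i = l ∧ j = k)) : 1 ≤ pairingCount i j k l := by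
  unfold pairingCount
  rcases h with ⟨rfl, rfl⟩ | ⟨rfl, rfl⟩ | ⟨rfl, rfl⟩ <;> split_ifs <;> simp_all

lemma sum_pairingCount [Fintype ι] :
    ∑ i : ι, ∑ j : ι, ∑ k : ι, ∑ l : ι, pairingCount i j k l = 3 * (Fintype.card ι : ℝ) ^ 2 := by
  simp only [pairingCount, mul_ite, mul_one, mul_zero, sum_add_distrib, sum_ite_eq, mem_univ,
    ↓reduceIte, sum_ite_irrel, sum_const_zero, sum_const, card_univ, nsmul_eq_mul]
  ring

end Combinatorics

section Probability

variable {Ω E : Type*} [MeasurableSpace Ω] {P : Measure Ω}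
  [NormedAddCommGroup E] [InnerProductSpace ℝ E]

lemma integrable_inner_mul_inner {W X Y Z : Ω → E}
    (hW : AEStronglyMeasurable W P) (hX : AEStronglyMeasurable X P)
    (hY : AEStronglyMeasurable Y P) (hZ : AEStronglyMeasurable Z P)
    (hW4 : Integrable (fun ω ↦ ‖W ω‖ ^ 4) P) (hX4 : Integrable (fun ω ↦ ‖X ω‖ ^ 4) P)
    (hY4 : Integrable (fun ω ↦ ‖Y ω‖ ^ 4) P) (hZ4 : Integrable (fun ω ↦ ‖Z ω‖ ^ 4) P) :
    Integrable (fun ω ↦ ⟪W ω, X ω⟫ * ⟪Y ω, Z ω⟫) P :=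
  (((hW4.add hX4).add hY4).add hZ4).div_const 4 |>.mono' ((hW.inner hX).mul (hY.inner hZ))
    (ae_of_all _ fun _ ↦ abs_inner_mul_inner_le _ _ _ _)

lemma integrable_inner_smul [IsFiniteMeasure P] {X Y Z : Ω → E}
    (hX : AEStronglyMeasurable X P) (hY : AEStronglyMeasurable Y P)
    (hZ : AEStronglyMeasurable Z P)
    (hX4 : Integrable (fun ω ↦ ‖X ω‖ ^ 4) P) (hY4 : Integrable (fun ω ↦ ‖Y ω‖ ^ 4) P)
    (hZ4 : Integrable (fun ω ↦ ‖Z ω‖ ^ 4) P) :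
    Integrable (fun ω ↦ ⟪Y ω, Z ω⟫ • X ω) P :=
  ((((hX4.add hY4).add hZ4).add (integrable_const 1)).div_const 4).mono'
    ((hY.inner hZ).smul hX) (ae_of_all _ fun _ ↦ norm_inner_smul_le _ _ _)

lemma integral_inner_mul_inner_le {W X Y Z : Ω → E}
    (hW : AEStronglyMeasurable W P) (hX : AEStronglyMeasurable X P)
    (hY : AEStronglyMeasurable Y P) (hZ : AEStronglyMeasurable Z P)
    (hW4 : Integrable (fun ω ↦ ‖W ω‖ ^ 4) P) (hX4 : Integrable (fun ω ↦ ‖X ω‖ ^ 4) P)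
    (hY4 : Integrable (fun ω ↦ ‖Y ω‖ ^ 4) P) (hZ4 : Integrable (fun ω ↦ ‖Z ω‖ ^ 4) P) :
    ∫ ω, ⟪W ω, X ω⟫ * ⟪Y ω, Z ω⟫ ∂P ≤
      (∫ ω, ‖W ω‖ ^ 4 ∂P + ∫ ω, ‖X ω‖ ^ 4 ∂P + ∫ ω, ‖Y ω‖ ^ 4 ∂P + ∫ ω, ‖Z ω‖ ^ 4 ∂P) / 4 := by
  refine (integral_mono (integrable_inner_mul_inner hW hX hY hZ hW4 hX4 hY4 hZ4)
    ((((hW4.add hX4).add hY4).add hZ4).div_const 4)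
    fun ω ↦ (le_abs_self _).trans (abs_inner_mul_inner_le _ _ _ _)).trans_eq ?_
  simp (disch := fun_prop) only [Pi.add_apply, integral_div, integral_add]

lemma integral_sum_sum_sum_sum {α : Type*} {s : Finset α} {f : α → α → α → α → Ω → ℝ}
    (hf : ∀ i j k l, Integrable (f i j k l) P) :
    ∫ ω, ∑ i ∈ s, ∑ j ∈ s, ∑ k ∈ s, ∑ l ∈ s, f i j k l ω ∂P =
      ∑ i ∈ s, ∑ j ∈ s, ∑ k ∈ s, ∑ l ∈ s, ∫ ω, f i j k l ω ∂P := by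
  simp (disch := fun_prop) only [integral_finsetSum]

end Probability

namespace ProbabilityTheory

variable {Ω ι E : Type*} [MeasurableSpace Ω] {P : Measure Ω}
  [NormedAddCommGroup E] [InnerProductSpace ℝ E] [CompleteSpace E] [SecondCountableTopology E]
  [MeasurableSpace E] [BorelSpace E] {r : ι → Ω → E}

lemma iIndepFun.integral_inner_mul_inner_eq_zero [IsFiniteMeasure P]
    (hmeas : ∀ n, Measurable (r n)) (hindep : iIndepFun r P)
    (hint1 : ∀ n, Integrable (r n) P) (hint4 : ∀ n, Integrable (fun ω ↦ ‖r n ω‖ ^ 4) P)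
    (hmean : ∀ n, ∫ ω, r n ω ∂P = 0) {i j k l : ι} (hij : i ≠ j) (hik : i ≠ k) (hil : i ≠ l) :
    ∫ ω, ⟪r i ω, r j ω⟫ * ⟪r k ω, r l ω⟫ ∂P = 0 := by
  classical
  have hV : Integrable (fun ω ↦ ⟪r k ω, r l ω⟫ • r j ω) P :=
    integrable_inner_smul (hmeas j).aestronglyMeasurable (hmeas k).aestronglyMeasurable
      (hmeas l).aestronglyMeasurable (hint4 j) (hint4 k) (hint4 l)
  have hindepV : IndepFun (r i) (fun ω ↦ ⟪r k ω, r l ω⟫ • r j ω) P := by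
    have hJ : j ∈ ({j, k, l} : Finset ι) := by simp
    have hK : k ∈ ({j, k, l} : Finset ι) := by simp
    have hL : l ∈ ({j, k, l} : Finset ι) := by simp
    exact (hindep.indepFun_finset {i} {j, k, l} (by simp [hij, hik, hil]) hmeas).comp
      (φ := fun v : ({i} : Finset ι) → E ↦ v ⟨i, mem_singleton_self i⟩)
      (ψ := fun v : ({j, k, l} : Finset ι) → E ↦ ⟪v ⟨k, hK⟩, v ⟨l, hL⟩⟫ • v ⟨j, hJ⟩)
      (by fun_prop) (by fun_prop)
  calc ∫ ω, ⟪r i ω, r j ω⟫ * ⟪r k ω, r l ω⟫ ∂P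
      = ∫ ω, innerSL ℝ (r i ω) (⟪r k ω, r l ω⟫ • r j ω) ∂P := by
        simp only [innerSL_apply_apply, real_inner_smul_right, mul_comm]
    _ = 0 := by
        rw [hindepV.integral_bilin (hint1 i) hV, hmean i, map_zero, zero_apply]

lemma iIndepFun.integral_inner_mul_inner_eq_zero_of_not_paired [IsFiniteMeasure P]
    (hmeas : ∀ n, Measurable (r n)) (hindep : iIndepFun r P)
    (hint1 : ∀ n, Integrable (r n) P) (hint4 : ∀ n, Integrable (fun ω ↦ ‖r n ω‖ ^ 4) P)
    (hmean : ∀ n, ∫ ω, r n ω ∂P = 0) {i j k l : ι}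
    (h : ¬((i = j ∧ k = l) ∨ (i = k ∧ j = l) ∨ (i = l ∧ j = k))) :
    ∫ ω, ⟪r i ω, r j ω⟫ * ⟪r k ω, r l ω⟫ ∂P = 0 := by
  obtain ⟨hij, hik, hil⟩ | ⟨hji, hjk, hjl⟩ | ⟨hki, hkj, hkl⟩ | ⟨hli, hlj, hlk⟩ :
      (i ≠ j ∧ i ≠ k ∧ i ≠ l) ∨ (j ≠ i ∧ j ≠ k ∧ j ≠ l) ∨ (k ≠ i ∧ k ≠ j ∧ k ≠ l) ∨
        (l ≠ i ∧ l ≠ j ∧ l ≠ k) := by grind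
  · exact hindep.integral_inner_mul_inner_eq_zero hmeas hint1 hint4 hmean hij hik hil
  · simpa only [real_inner_comm (r i _)] using
      hindep.integral_inner_mul_inner_eq_zero hmeas hint1 hint4 hmean hji hjk hjl
  · simpa only [mul_comm] using
      hindep.integral_inner_mul_inner_eq_zero hmeas hint1 hint4 hmean hkl hki hkj
  · simpa only [mul_comm, real_inner_comm (r k _)] using
      hindep.integral_inner_mul_inner_eq_zero hmeas hint1 hint4 hmean hlk hli hlj

lemma iIndepFun.integral_inner_mul_inner_le_pairingCount [DecidableEq ι]
    [IsProbabilityMeasure P] {σ : ℝ} (hmeas : ∀ n, Measurable (r n)) (hindep : iIndepFun r P)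
    (hint1 : ∀ n, Integrable (r n) P) (hint4 : ∀ n, Integrable (fun ω ↦ ‖r n ω‖ ^ 4) P)
    (hmean : ∀ n, ∫ ω, r n ω ∂P = 0) (hmom4 : ∀ n, ∫ ω, ‖r n ω‖ ^ 4 ∂P ≤ σ ^ 4) (i j k l : ι) :
    ∫ ω, ⟪r i ω, r j ω⟫ * ⟪r k ω, r l ω⟫ ∂P ≤ σ ^ 4 * pairingCount i j k l := by
  by_cases hpair : (i = j ∧ k = l) ∨ (i = k ∧ j = l) ∨ (i = l ∧ j = k)
  · calc ∫ ω, ⟪r i ω, r j ω⟫ * ⟪r k ω, r l ω⟫ ∂P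
        ≤ (∫ ω, ‖r i ω‖ ^ 4 ∂P + ∫ ω, ‖r j ω‖ ^ 4 ∂P + ∫ ω, ‖r k ω‖ ^ 4 ∂P +
            ∫ ω, ‖r l ω‖ ^ 4 ∂P) / 4 :=
          integral_inner_mul_inner_le (hmeas i).aestronglyMeasurable
            (hmeas j).aestronglyMeasurable (hmeas k).aestronglyMeasurable
            (hmeas l).aestronglyMeasurable (hint4 i) (hint4 j) (hint4 k) (hint4 l)
      _ ≤ σ ^ 4 := by linarith [hmom4 i, hmom4 j, hmom4 k, hmom4 l]
      _ ≤ σ ^ 4 * pairingCount i j k l :=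
          le_mul_of_one_le_right (by positivity) (one_le_pairingCount hpair)
  · rw [hindep.integral_inner_mul_inner_eq_zero_of_not_paired hmeas hint1 hint4 hmean hpair]
    exact mul_nonneg (by positivity) (pairingCount_nonneg i j k l)

theorem iIndepFun.integral_norm_sum_pow_four_le [Fintype ι] [IsProbabilityMeasure P]
    {σ : ℝ} (hmeas : ∀ n, Measurable (r n)) (hindep : iIndepFun r P)
    (hint1 : ∀ n, Integrable (r n) P) (hint4 : ∀ n, Integrable (fun ω ↦ ‖r n ω‖ ^ 4) P)
    (hmean : ∀ n, ∫ ω, r n ω ∂P = 0) (hmom4 : ∀ n, ∫ ω, ‖r n ω‖ ^ 4 ∂P ≤ σ ^ 4) :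
    ∫ ω, ‖∑ n, r n ω‖ ^ 4 ∂P ≤ 3 * Fintype.card ι ^ 2 * σ ^ 4 := by
  classical
  calc ∫ ω, ‖∑ n, r n ω‖ ^ 4 ∂P
      = ∑ i, ∑ j, ∑ k, ∑ l, ∫ ω, ⟪r i ω, r j ω⟫ * ⟪r k ω, r l ω⟫ ∂P := by
        simp_rw [norm_sum_pow_four]
        exact integral_sum_sum_sum_sum fun i j k l ↦ integrable_inner_mul_inner
          (hmeas i).aestronglyMeasurable (hmeas j).aestronglyMeasurable
          (hmeas k).aestronglyMeasurable (hmeas l).aestronglyMeasurable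
          (hint4 i) (hint4 j) (hint4 k) (hint4 l)
    _ ≤ ∑ i, ∑ j, ∑ k, ∑ l, σ ^ 4 * pairingCount i j k l := by
        gcongr with i _ j _ k _ l _
        exact hindep.integral_inner_mul_inner_le_pairingCount hmeas hint1 hint4 hmean hmom4
          i j k l
    _ = 3 * Fintype.card ι ^ 2 * σ ^ 4 := by
        simp only [← mul_sum, sum_pairingCount]
        ring

end ProbabilityTheory

theorem fourth_moment_variance_reduction_general
    (M N : ℕ) (σ : ℝ)
    {Ω : Type*} [MeasurableSpace Ω] (P : Measure Ω) [IsProbabilityMeasure P]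
    (r : Fin N → Ω → EuclideanSpace ℝ (Fin M))
    (hmeas : ∀ n, Measurable (r n))
    (hindep : iIndepFun r P)
    (hint1 : ∀ n, Integrable (r n) P)
    (hint4 : ∀ n, Integrable (fun ω => ‖r n ω‖ ^ 4) P)
    (hmean : ∀ n, ∫ ω, r n ω ∂P = 0)
    (hmom4 : ∀ n, ∫ ω, ‖r n ω‖ ^ 4 ∂P ≤ σ ^ 4) :
    ∫ ω, ‖(N : ℝ)⁻¹ • ∑ n, r n ω‖ ^ 4 ∂P ≤ 3 * σ ^ 4 / (N : ℝ) ^ 2 := by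
  have hsum := hindep.integral_norm_sum_pow_four_le hmeas hint1 hint4 hmean hmom4
  rw [Fintype.card_fin] at hsum
  calc ∫ ω, ‖(N : ℝ)⁻¹ • ∑ n, r n ω‖ ^ 4 ∂P = (N : ℝ)⁻¹ ^ 4 * ∫ ω, ‖∑ n, r n ω‖ ^ 4 ∂P := by
        simp only [norm_smul, mul_pow, norm_inv, RCLike.norm_natCast]
        exact integral_const_mul _ _
    _ ≤ (N : ℝ)⁻¹ ^ 4 * (3 * N ^ 2 * σ ^ 4) := by gcongr
    _ = 3 * σ ^ 4 / (N : ℝ) ^ 2 := by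
        rcases N.eq_zero_or_pos with rfl | hN
        · simp
        · field_simp

/-- **Fourth-order variance reduction for mini-batch averages (Appendix A.4 of Dif-MAML).**
For i.i.d. zero-mean random vectors `r_1, …, r_N` with `E‖r_n‖⁴ ≤ σ⁴`,
the mini-batch average satisfies `E‖(1/N) Σ r_n‖⁴ ≤ 3σ⁴/N²`. -/
theorem fourth_moment_variance_reduction
    (M N : ℕ) (σ : ℝ) (hN : 1 ≤ N) (hσ : 0 < σ)
    {Ω : Type*} [MeasurableSpace Ω] (P : Measure Ω) [IsProbabilityMeasure P]
    (r : Fin N → Ω → EuclideanSpace ℝ (Fin M))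
    (hmeas : ∀ n, Measurable (r n))
    (hindep : iIndepFun r P)
    (hident : ∀ n m, IdentDistrib (r n) (r m) P P)
    (hint1 : ∀ n, Integrable (r n) P)
    (hint4 : ∀ n, Integrable (fun ω => ‖r n ω‖ ^ 4) P)
    (hmean : ∀ n, ∫ ω, r n ω ∂P = 0)
    (hmom4 : ∀ n, ∫ ω, ‖r n ω‖ ^ 4 ∂P ≤ σ ^ 4)
    (havg_int : Integrable (fun ω => ‖(N : ℝ)⁻¹ • ∑ n, r n ω‖ ^ 4) P) :
    ∫ ω, ‖(N : ℝ)⁻¹ • ∑ n, r n ω‖ ^ 4 ∂P ≤ 3 * σ ^ 4 / (N : ℝ) ^ 2 :=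
  fourth_moment_variance_reduction_general M N σ P r hmeas hindep hint1 hint4 hmean hmom4
end

section
/- E_{(ω₁,ω₂)} ‖ (I − αH(ω₁)) q( w − α g(ω₁), ω₂) − (I − α∇²J(w)) ∇J( w − α∇J(w) ) ‖² ≤ 6(1+αL)²σ_G²(1/N_o + L²α²/N_in) + (6α²σ_H²/N_in)(B² + σ_G²/N_o) + (9α⁴/N_in²)(σ_H⁴ + L⁴σ_G⁴). (This is the paper's Lemma 7 / Appendix Lemma C.1: the per-task disagreement between the stochastic task meta-gradient and the exact task meta-gradient is bounded in mean square.) -/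
/-!
Write `T = ∇²J(w)`, `G⋆ = ∇J(w - α∇J(w))` and `u = w - α g`. The error splits as
`(q - G⋆) - α T (q - G⋆) - α (H - T)(q - G⋆) - α (H - T) G⋆`, and the Lipschitz bound on `∇J`
gives `‖q - G⋆‖ ≤ ‖q - ∇J(u)‖ + α L ‖g - ∇J(w)‖`. Squaring with `(x + y + z)² ≤ 3(x² + y² + z²)`,
`(x + y)² ≤ 2(x² + y²)` and AM-GM bounds the squared error by an expression that is affine in
`‖q - ∇J(u)‖²`, with coefficients depending on `ω₁` only. Integrating first in `ω₂` (the noise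
bound on `q` holds at every point, in particular at the random point `u`) and then in `ω₁` gives
the claim.
-/

open MeasureTheory ProbabilityTheory

section Deterministic

variable {E : Type*} [NormedAddCommGroup E] [NormedSpace ℝ E]

theorem norm_id_sub_smul_apply_sub_le {α : ℝ} (hα : 0 ≤ α) (A B : E →L[ℝ] E) (x y : E) :
    ‖(ContinuousLinearMap.id ℝ E - α • A) x - (ContinuousLinearMap.id ℝ E - α • B) y‖
      ≤ (1 + α * ‖B‖ + α * ‖A - B‖) * ‖x - y‖ + α * ‖y‖ * ‖A - B‖ := by
  have hsplit : (ContinuousLinearMap.id ℝ E - α • A) x - (ContinuousLinearMap.id ℝ E - α • B) y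
      = (x - y) - α • B (x - y) - α • (A - B) (x - y) - α • (A - B) y := by
    simp only [sub_apply, smul_apply, ContinuousLinearMap.id_apply, map_sub]
    module
  have hB := B.le_opNorm (x - y)
  have hAB := (A - B).le_opNorm (x - y)
  have hABy := (A - B).le_opNorm y
  rw [hsplit]
  refine (norm_sub_le _ _).trans ?_
  grw [norm_sub_le, norm_sub_le, norm_smul, norm_smul, norm_smul, Real.norm_of_nonneg hα,
    hB, hAB, hABy]
  linarith

theorem sq_le_of_le_mul_add_mul {s a b h α L B : ℝ} (hs : 0 ≤ s)
    (hle : s ≤ (1 + α * L + α * h) * (a + L * α * b) + α * B * h) :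
    s ^ 2 ≤ (6 * (1 + α * L) ^ 2 + 6 * α ^ 2 * h ^ 2) * a ^ 2
      + (6 * (1 + α * L) ^ 2 * L ^ 2 * α ^ 2 * b ^ 2 + 3 * α ^ 2 * B ^ 2 * h ^ 2
        + 3 * α ^ 4 * h ^ 4 + 3 * α ^ 4 * L ^ 4 * b ^ 4) := by
  set c := 1 + α * L
  set d := a + L * α * b
  have hsq : s ^ 2 ≤ 3 * (c ^ 2 * d ^ 2) + 3 * (α ^ 2 * h ^ 2 * d ^ 2) + 3 * (α * B * h) ^ 2 := by
    nlinarith [sq_nonneg (c * d - α * h * d), sq_nonneg (c * d - α * B * h),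
      sq_nonneg (α * h * d - α * B * h)]
  have hd : d ^ 2 ≤ 2 * (a ^ 2 + (L * α * b) ^ 2) := add_sq_le
  have hamgm : 2 * (h ^ 2 * (L ^ 2 * b ^ 2)) ≤ h ^ 4 + L ^ 4 * b ^ 4 := by
    nlinarith [sq_nonneg (h ^ 2 - L ^ 2 * b ^ 2)]
  have h1 := mul_le_mul_of_nonneg_left hd (by positivity : (0 : ℝ) ≤ 3 * c ^ 2)
  have h2 := mul_le_mul_of_nonneg_left hd (by positivity : (0 : ℝ) ≤ 3 * α ^ 2 * h ^ 2)
  have h3 := mul_le_mul_of_nonneg_left hamgm (by positivity : (0 : ℝ) ≤ 3 * α ^ 4)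
  linear_combination hsq + h1 + h2 + h3

theorem sq_norm_id_sub_smul_apply_sub_le {α L B : ℝ} (hα : 0 ≤ α) {G : E → E}
    (hlip : ∀ u v, ‖G u - G v‖ ≤ L * ‖u - v‖) (hbound : ∀ u, ‖G u‖ ≤ B)
    {T : E →L[ℝ] E} (hT : ‖T‖ ≤ L) (A : E →L[ℝ] E) (w x Q : E) :
    ‖(ContinuousLinearMap.id ℝ E - α • A) Q
        - (ContinuousLinearMap.id ℝ E - α • T) (G (w - α • G w))‖ ^ 2
      ≤ (6 * (1 + α * L) ^ 2 + 6 * α ^ 2 * ‖A - T‖ ^ 2) * ‖Q - G (w - α • x)‖ ^ 2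
        + (6 * (1 + α * L) ^ 2 * L ^ 2 * α ^ 2 * ‖x - G w‖ ^ 2 + 3 * α ^ 2 * B ^ 2 * ‖A - T‖ ^ 2
          + 3 * α ^ 4 * ‖A - T‖ ^ 4 + 3 * α ^ 4 * L ^ 4 * ‖x - G w‖ ^ 4) := by
  have hstep : ‖G (w - α • x) - G (w - α • G w)‖ ≤ L * α * ‖x - G w‖ := by
    grw [hlip, sub_sub_sub_cancel_left, ← smul_sub, norm_smul, Real.norm_of_nonneg hα,
      norm_sub_rev, mul_assoc]
  have hdist : ‖Q - G (w - α • G w)‖ ≤ ‖Q - G (w - α • x)‖ + L * α * ‖x - G w‖ :=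
    (norm_sub_le_norm_sub_add_norm_sub _ _ _).trans (by grw [hstep])
  have hL : 0 ≤ L := (norm_nonneg T).trans hT
  refine sq_le_of_le_mul_add_mul (norm_nonneg _) ?_
  grw [norm_id_sub_smul_apply_sub_le hα, hT, hdist, hbound]

end Deterministic

section Integration

variable {Ω₁ Ω₂ : Type*} [MeasurableSpace Ω₁] [MeasurableSpace Ω₂]

theorem integral_prod_le_of_ae_integral_le {μ : Measure Ω₁} {ν : Measure Ω₂} [SFinite μ]
    [SFinite ν] {f : Ω₁ × Ω₂ → ℝ} {Φ : Ω₁ → ℝ} (hf : Integrable f (μ.prod ν))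
    (hle : ∀ᵐ x ∂μ, ∫ y, f (x, y) ∂ν ≤ Φ x) (hΦ : Integrable Φ μ) :
    ∫ z, f z ∂(μ.prod ν) ≤ ∫ x, Φ x ∂μ :=
  (integral_prod f hf).trans_le (integral_mono_ae hf.integral_prod_left hΦ hle)

theorem integral_le_mul_add_of_le_mul_add {μ : Measure Ω₁} [IsProbabilityMeasure μ]
    {f r : Ω₁ → ℝ} {c d K : ℝ} (hf : 0 ≤ f) (hr : Integrable r μ) (hrK : ∫ x, r x ∂μ ≤ K)
    (hc : 0 ≤ c) (hle : ∀ x, f x ≤ c * r x + d) :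
    ∫ x, f x ∂μ ≤ c * K + d := by
  calc ∫ x, f x ∂μ ≤ ∫ x, (c * r x + d) ∂μ :=
        integral_mono_of_nonneg (.of_forall hf) ((hr.const_mul c).add (integrable_const d))
          (.of_forall hle)
    _ = c * ∫ x, r x ∂μ + d := by
        rw [integral_add (hr.const_mul c) (integrable_const d), integral_const_mul,
          integral_const, probReal_univ, one_smul]
    _ ≤ c * K + d := by gcongr

end Integration

theorem per_task_meta_gradient_noise_bound_general
    (M : ℕ) (α L B σG σH : ℝ) (Nin No : ℕ)
    (hα : 0 < α)
    (w : EuclideanSpace ℝ (Fin M))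
    {Ω₁ Ω₂ : Type*} [MeasurableSpace Ω₁] [MeasurableSpace Ω₂]
    (P₁ : Measure Ω₁) (P₂ : Measure Ω₂) [IsProbabilityMeasure P₁] [IsProbabilityMeasure P₂]
    (J : EuclideanSpace ℝ (Fin M) → ℝ)
    (hlip : ∀ u v, ‖gradient J u - gradient J v‖ ≤ L * ‖u - v‖)
    (hhess : ∀ u, ‖fderiv ℝ (gradient J) u‖ ≤ L)
    (hbound : ∀ u, ‖gradient J u‖ ≤ B)
    (g : Ω₁ → EuclideanSpace ℝ (Fin M))
    (H : Ω₁ → EuclideanSpace ℝ (Fin M) →L[ℝ] EuclideanSpace ℝ (Fin M))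
    (q : EuclideanSpace ℝ (Fin M) → Ω₂ → EuclideanSpace ℝ (Fin M))
    (hg2 : ∫ ω₁, ‖g ω₁ - gradient J w‖ ^ 2 ∂P₁ ≤ σG ^ 2 / (Nin : ℝ))
    (hg4 : ∫ ω₁, ‖g ω₁ - gradient J w‖ ^ 4 ∂P₁ ≤ 3 * σG ^ 4 / (Nin : ℝ) ^ 2)
    (hH2 : ∫ ω₁, ‖H ω₁ - fderiv ℝ (gradient J) w‖ ^ 2 ∂P₁ ≤ σH ^ 2 / (Nin : ℝ))
    (hH4 : ∫ ω₁, ‖H ω₁ - fderiv ℝ (gradient J) w‖ ^ 4 ∂P₁ ≤ 3 * σH ^ 4 / (Nin : ℝ) ^ 2)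
    (hq2 : ∀ u, ∫ ω₂, ‖q u ω₂ - gradient J u‖ ^ 2 ∂P₂ ≤ σG ^ 2 / (No : ℝ))
    (hg2_int : Integrable (fun ω₁ => ‖g ω₁ - gradient J w‖ ^ 2) P₁)
    (hg4_int : Integrable (fun ω₁ => ‖g ω₁ - gradient J w‖ ^ 4) P₁)
    (hH2_int : Integrable (fun ω₁ => ‖H ω₁ - fderiv ℝ (gradient J) w‖ ^ 2) P₁)
    (hH4_int : Integrable (fun ω₁ => ‖H ω₁ - fderiv ℝ (gradient J) w‖ ^ 4) P₁)
    (hq2_int : ∀ u, Integrable (fun ω₂ => ‖q u ω₂ - gradient J u‖ ^ 2) P₂)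
    (hint : Integrable (fun p : Ω₁ × Ω₂ =>
      ‖(ContinuousLinearMap.id ℝ (EuclideanSpace ℝ (Fin M)) - α • H p.1)
          (q (w - α • g p.1) p.2)
        - (ContinuousLinearMap.id ℝ (EuclideanSpace ℝ (Fin M)) - α • fderiv ℝ (gradient J) w)
            (gradient J (w - α • gradient J w))‖ ^ 2) (P₁.prod P₂)) :
    ∫ p : Ω₁ × Ω₂,
      ‖(ContinuousLinearMap.id ℝ (EuclideanSpace ℝ (Fin M)) - α • H p.1)
          (q (w - α • g p.1) p.2)
        - (ContinuousLinearMap.id ℝ (EuclideanSpace ℝ (Fin M)) - α • fderiv ℝ (gradient J) w)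
            (gradient J (w - α • gradient J w))‖ ^ 2 ∂(P₁.prod P₂)
      ≤ 6 * (1 + α * L) ^ 2 * σG ^ 2 * (1 / (No : ℝ) + L ^ 2 * α ^ 2 / (Nin : ℝ))
        + (6 * α ^ 2 * σH ^ 2 / (Nin : ℝ)) * (B ^ 2 + σG ^ 2 / (No : ℝ))
        + (9 * α ^ 4 / (Nin : ℝ) ^ 2) * (σH ^ 4 + L ^ 4 * σG ^ 4) := by
  refine (integral_prod_le_of_ae_integral_le hint (.of_forall fun ω₁ =>
    integral_le_mul_add_of_le_mul_add (fun _ => by positivity) (hq2_int _) (hq2 _)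
      (by positivity) fun ω₂ => sq_norm_id_sub_smul_apply_sub_le hα.le hlip hbound (hhess w)
        (H ω₁) w (g ω₁) (q (w - α • g ω₁) ω₂)) ?_).trans ?_
  · fun_prop
  · simp (disch := fun_prop) only [integral_add, integral_const_mul, integral_mul_const,
      add_mul, integral_const, probReal_univ, one_smul]
    grw [hg2, hg4, hH2, hH4]
    have hslack : 0 ≤ 3 * α ^ 2 * B ^ 2 * (σH ^ 2 / (Nin : ℝ)) := by positivity
    linear_combination hslack

/-- **Per-task meta-gradient noise bound (Lemma 7 / Appendix Lemma C.1 of Dif-MAML).**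
The mean-square disagreement between the stochastic task meta-gradient and the exact task
meta-gradient is bounded. -/
theorem per_task_meta_gradient_noise_bound
    (M : ℕ) (α L B σG σH : ℝ) (Nin No : ℕ)
    (hα : 0 < α) (hL : 0 < L) (hB : 0 < B) (hσG : 0 < σG) (hσH : 0 < σH)
    (hNin : 1 ≤ Nin) (hNo : 1 ≤ No)
    (w : EuclideanSpace ℝ (Fin M))
    {Ω₁ Ω₂ : Type*} [MeasurableSpace Ω₁] [MeasurableSpace Ω₂]
    (P₁ : Measure Ω₁) (P₂ : Measure Ω₂) [IsProbabilityMeasure P₁] [IsProbabilityMeasure P₂]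
    (J : EuclideanSpace ℝ (Fin M) → ℝ)
    (hdiff : Differentiable ℝ J) (hdiff2 : Differentiable ℝ (gradient J))
    (hlip : ∀ u v, ‖gradient J u - gradient J v‖ ≤ L * ‖u - v‖)
    (hhess : ∀ u, ‖fderiv ℝ (gradient J) u‖ ≤ L)
    (hbound : ∀ u, ‖gradient J u‖ ≤ B)
    (g : Ω₁ → EuclideanSpace ℝ (Fin M))
    (H : Ω₁ → EuclideanSpace ℝ (Fin M) →L[ℝ] EuclideanSpace ℝ (Fin M))
    (q : EuclideanSpace ℝ (Fin M) → Ω₂ → EuclideanSpace ℝ (Fin M))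
    (hgmeas : Measurable g) (hHmeas : StronglyMeasurable H)
    (hqmeas : StronglyMeasurable (fun p : EuclideanSpace ℝ (Fin M) × Ω₂ => q p.1 p.2))
    (hg2 : ∫ ω₁, ‖g ω₁ - gradient J w‖ ^ 2 ∂P₁ ≤ σG ^ 2 / (Nin : ℝ))
    (hg4 : ∫ ω₁, ‖g ω₁ - gradient J w‖ ^ 4 ∂P₁ ≤ 3 * σG ^ 4 / (Nin : ℝ) ^ 2)
    (hH2 : ∫ ω₁, ‖H ω₁ - fderiv ℝ (gradient J) w‖ ^ 2 ∂P₁ ≤ σH ^ 2 / (Nin : ℝ))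
    (hH4 : ∫ ω₁, ‖H ω₁ - fderiv ℝ (gradient J) w‖ ^ 4 ∂P₁ ≤ 3 * σH ^ 4 / (Nin : ℝ) ^ 2)
    (hq2 : ∀ u, ∫ ω₂, ‖q u ω₂ - gradient J u‖ ^ 2 ∂P₂ ≤ σG ^ 2 / (No : ℝ))
    (hg2_int : Integrable (fun ω₁ => ‖g ω₁ - gradient J w‖ ^ 2) P₁)
    (hg4_int : Integrable (fun ω₁ => ‖g ω₁ - gradient J w‖ ^ 4) P₁)
    (hH2_int : Integrable (fun ω₁ => ‖H ω₁ - fderiv ℝ (gradient J) w‖ ^ 2) P₁)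
    (hH4_int : Integrable (fun ω₁ => ‖H ω₁ - fderiv ℝ (gradient J) w‖ ^ 4) P₁)
    (hq2_int : ∀ u, Integrable (fun ω₂ => ‖q u ω₂ - gradient J u‖ ^ 2) P₂)
    (hint : Integrable (fun p : Ω₁ × Ω₂ =>
      ‖(ContinuousLinearMap.id ℝ (EuclideanSpace ℝ (Fin M)) - α • H p.1)
          (q (w - α • g p.1) p.2)
        - (ContinuousLinearMap.id ℝ (EuclideanSpace ℝ (Fin M)) - α • fderiv ℝ (gradient J) w)
            (gradient J (w - α • gradient J w))‖ ^ 2) (P₁.prod P₂)) :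
    ∫ p : Ω₁ × Ω₂,
      ‖(ContinuousLinearMap.id ℝ (EuclideanSpace ℝ (Fin M)) - α • H p.1)
          (q (w - α • g p.1) p.2)
        - (ContinuousLinearMap.id ℝ (EuclideanSpace ℝ (Fin M)) - α • fderiv ℝ (gradient J) w)
            (gradient J (w - α • gradient J w))‖ ^ 2 ∂(P₁.prod P₂)
      ≤ 6 * (1 + α * L) ^ 2 * σG ^ 2 * (1 / (No : ℝ) + L ^ 2 * α ^ 2 / (Nin : ℝ))
        + (6 * α ^ 2 * σH ^ 2 / (Nin : ℝ)) * (B ^ 2 + σG ^ 2 / (No : ℝ))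
        + (9 * α ^ 4 / (Nin : ℝ) ^ 2) * (σH ^ 4 + L ^ 4 * σG ^ 4) :=
  per_task_meta_gradient_noise_bound_general M α L B σG σH Nin No hα w P₁ P₂ J hlip hhess hbound g H
    q hg2 hg4 hH2 hH4 hq2 hg2_int hg4_int hH2_int hH4_int hq2_int hint
end

section
/- E_{t∼π} ‖ (I − α∇²J_t(w)) ∇J_t( w − α∇J_t(w) ) − (I − α∇²J(w)) ∇J( w − α∇J(w) ) ‖² ≤ 8(1+αL)²(1+α²L²)γ_G² + 4B²α²γ_H² + 2α⁴γ_H⁴ + 16(1+α⁴L⁴)γ_G⁴. (This is the paper's Appendix Lemma C.2: the disagreement between the exact task meta-gradient and the meta-gradient of the mean risk is bounded in mean square under bounded task variability.) -/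
open MeasureTheory

-- Jensen / Cauchy-Schwarz: second moment dominates square of mean on a probability space
lemma sq_int_le {T : Type*} [MeasurableSpace T] (π : Measure T) [IsProbabilityMeasure π]
    (f : T → ℝ) (hf : Integrable f π) (hf2 : Integrable (fun t => f t ^ 2) π) :
    (∫ t, f t ∂π) ^ 2 ≤ ∫ t, f t ^ 2 ∂π := by
  set m := ∫ t, f t ∂π with hm
  have h0 : 0 ≤ ∫ t, (f t - m) ^ 2 ∂π := integral_nonneg fun t => sq_nonneg _
  have he : ∫ t, (f t - m) ^ 2 ∂π = (∫ t, f t ^ 2 ∂π) - m ^ 2 := by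
    have : (fun t => (f t - m) ^ 2) = fun t => f t ^ 2 - (2 * m) * f t + m ^ 2 := by
      funext t; ring
    have hsub : Integrable (fun t => f t ^ 2 - 2 * m * f t) π := hf2.sub (hf.const_mul (2 * m))
    rw [this, integral_add hsub (integrable_const _),
      integral_sub hf2 (hf.const_mul _), MeasureTheory.integral_const_mul, integral_const]
    simp [hm]; ring
  linarith

lemma fourth_moment {T : Type*} [MeasurableSpace T] (π : Measure T) [IsProbabilityMeasure π]
    (g : T → ℝ) (γ : ℝ) (hγ : 0 < γ) (hg : ∀ t, 0 ≤ g t)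
    (h4 : Integrable (fun t => g t ^ 4) π) (hb : ∫ t, g t ^ 4 ∂π ≤ γ ^ 4) :
    ∫ t, g t ^ 2 ∂π ≤ γ ^ 2 := by
  have hmeas : AEStronglyMeasurable (fun t => g t ^ 2) π := by
    have : (fun t => g t ^ 2) = fun t => Real.sqrt (g t ^ 4) := by
      funext t
      rw [show g t ^ 4 = (g t ^ 2) ^ 2 by ring, Real.sqrt_sq (sq_nonneg _)]
    rw [this]
    exact Real.continuous_sqrt.comp_aestronglyMeasurable h4.1
  have hi2 : Integrable (fun t => g t ^ 2) π := by
    refine ((integrable_const (1 : ℝ)).add h4).mono' hmeas (ae_of_all _ fun t => ?_)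
    simp only [Pi.add_apply]
    rw [Real.norm_of_nonneg (sq_nonneg _)]
    nlinarith [sq_nonneg (g t ^ 2 - 1)]
  have h4' : Integrable (fun t => (g t ^ 2) ^ 2) π := by simpa [← pow_mul] using h4
  have := sq_int_le π (fun t => g t ^ 2) hi2 h4'
  have hb' : (∫ t, g t ^ 2 ∂π) ^ 2 ≤ γ ^ 4 := by
    refine this.trans ?_
    simpa [← pow_mul] using hb
  have hnn : 0 ≤ ∫ t, g t ^ 2 ∂π := integral_nonneg fun t => sq_nonneg _
  nlinarith [sq_nonneg (γ ^ 2)]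

open ProbabilityTheory

set_option maxHeartbeats 1000000 in
/-- **Task variability bound on meta-gradients (Appendix Lemma C.2 of Dif-MAML).**
The mean-square disagreement between the exact task meta-gradient and the meta-gradient of
the mean risk is bounded under bounded task variability. -/
theorem task_variability_meta_gradient_bound
    (M : ℕ) (α L B γG γH : ℝ)
    (hα : 0 < α) (hL : 0 < L) (hB : 0 < B) (hγG : 0 < γG) (hγH : 0 < γH)
    (w : EuclideanSpace ℝ (Fin M))
    {T : Type*} [MeasurableSpace T] (π : Measure T) [IsProbabilityMeasure π]
    (Jt : T → EuclideanSpace ℝ (Fin M) → ℝ) (J : EuclideanSpace ℝ (Fin M) → ℝ)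
    (hJt_diff : ∀ t, Differentiable ℝ (Jt t))
    (hJt_diff2 : ∀ t, Differentiable ℝ (gradient (Jt t)))
    (hJt_lip : ∀ t u v, ‖gradient (Jt t) u - gradient (Jt t) v‖ ≤ L * ‖u - v‖)
    (hJt_hess : ∀ t u, ‖fderiv ℝ (gradient (Jt t)) u‖ ≤ L)
    (hJt_bound : ∀ t u, ‖gradient (Jt t) u‖ ≤ B)
    (hJ_diff : Differentiable ℝ J) (hJ_diff2 : Differentiable ℝ (gradient J))
    (hJ_lip : ∀ u v, ‖gradient J u - gradient J v‖ ≤ L * ‖u - v‖)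
    (hJ_bound : ∀ u, ‖gradient J u‖ ≤ B)
    (hvarG : ∀ u : EuclideanSpace ℝ (Fin M),
      ∫ t, ‖gradient (Jt t) u - gradient J u‖ ^ 4 ∂π ≤ γG ^ 4)
    (hvarH : ∀ u : EuclideanSpace ℝ (Fin M),
      ∫ t, ‖fderiv ℝ (gradient (Jt t)) u - fderiv ℝ (gradient J) u‖ ^ 4 ∂π ≤ γH ^ 4)
    (hvarG_int : ∀ u : EuclideanSpace ℝ (Fin M),
      Integrable (fun t => ‖gradient (Jt t) u - gradient J u‖ ^ 4) π)
    (hvarH_int : ∀ u : EuclideanSpace ℝ (Fin M),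
      Integrable (fun t => ‖fderiv ℝ (gradient (Jt t)) u - fderiv ℝ (gradient J) u‖ ^ 4) π)
    (hint : Integrable (fun t =>
      ‖(ContinuousLinearMap.id ℝ (EuclideanSpace ℝ (Fin M)) - α • fderiv ℝ (gradient (Jt t)) w)
          (gradient (Jt t) (w - α • gradient (Jt t) w))
        - (ContinuousLinearMap.id ℝ (EuclideanSpace ℝ (Fin M)) - α • fderiv ℝ (gradient J) w)
            (gradient J (w - α • gradient J w))‖ ^ 2) π) :
    ∫ t,
      ‖(ContinuousLinearMap.id ℝ (EuclideanSpace ℝ (Fin M)) - α • fderiv ℝ (gradient (Jt t)) w)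
          (gradient (Jt t) (w - α • gradient (Jt t) w))
        - (ContinuousLinearMap.id ℝ (EuclideanSpace ℝ (Fin M)) - α • fderiv ℝ (gradient J) w)
            (gradient J (w - α • gradient J w))‖ ^ 2 ∂π
      ≤ 8 * (1 + α * L) ^ 2 * (1 + α ^ 2 * L ^ 2) * γG ^ 2
        + 4 * B ^ 2 * α ^ 2 * γH ^ 2 + 2 * α ^ 4 * γH ^ 4
        + 16 * (1 + α ^ 4 * L ^ 4) * γG ^ 4 := by
  set u1 : EuclideanSpace ℝ (Fin M) := w - α • gradient J w with hu1
  set c : ℝ := 1 + α * L with hc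
  have hc0 : 0 ≤ c := by positivity
  -- the three variability functions
  set G0 : T → ℝ := fun t => ‖gradient (Jt t) w - gradient J w‖ with hG0
  set G1 : T → ℝ := fun t => ‖gradient (Jt t) u1 - gradient J u1‖ with hG1
  set Hd : T → ℝ := fun t => ‖fderiv ℝ (gradient (Jt t)) w - fderiv ℝ (gradient J) w‖ with hHd
  -- integrability of squares
  have sq_int : ∀ (g : T → ℝ), (∀ t, 0 ≤ g t) → Integrable (fun t => g t ^ 4) π →
      Integrable (fun t => g t ^ 2) π := by
    intro g hg h4
    have hmeas : AEStronglyMeasurable (fun t => g t ^ 2) π := by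
      have : (fun t => g t ^ 2) = fun t => Real.sqrt (g t ^ 4) := by
        funext t
        rw [show g t ^ 4 = (g t ^ 2) ^ 2 by ring, Real.sqrt_sq (sq_nonneg _)]
      rw [this]
      exact Real.continuous_sqrt.comp_aestronglyMeasurable h4.1
    refine ((integrable_const (1 : ℝ)).add h4).mono' hmeas (ae_of_all _ fun t => ?_)
    simp only [Pi.add_apply]
    rw [Real.norm_of_nonneg (sq_nonneg _)]
    nlinarith [sq_nonneg (g t ^ 2 - 1)]
  have hG0i : Integrable (fun t => G0 t ^ 2) π := sq_int _ (fun t => norm_nonneg _) (hvarG_int w)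
  have hG1i : Integrable (fun t => G1 t ^ 2) π := sq_int _ (fun t => norm_nonneg _) (hvarG_int u1)
  have hHdi : Integrable (fun t => Hd t ^ 2) π := sq_int _ (fun t => norm_nonneg _) (hvarH_int w)
  -- pointwise bound
  have hpt : ∀ t,
      ‖(ContinuousLinearMap.id ℝ (EuclideanSpace ℝ (Fin M)) - α • fderiv ℝ (gradient (Jt t)) w)
          (gradient (Jt t) (w - α • gradient (Jt t) w))
        - (ContinuousLinearMap.id ℝ (EuclideanSpace ℝ (Fin M)) - α • fderiv ℝ (gradient J) w)
            (gradient J (w - α • gradient J w))‖ ^ 2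
      ≤ 4 * c ^ 2 * α ^ 2 * L ^ 2 * G0 t ^ 2 + 4 * c ^ 2 * G1 t ^ 2
          + 2 * α ^ 2 * B ^ 2 * Hd t ^ 2 := by
    intro t
    set Ht := fderiv ℝ (gradient (Jt t)) w
    set H := fderiv ℝ (gradient J) w
    set ut := gradient (Jt t) (w - α • gradient (Jt t) w)
    set u := gradient J u1
    set At := ContinuousLinearMap.id ℝ (EuclideanSpace ℝ (Fin M)) - α • Ht with hAt
    have hdecomp : At ut - (ContinuousLinearMap.id ℝ (EuclideanSpace ℝ (Fin M)) - α • H) u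
        = At (ut - u) - α • ((Ht - H) u) := by
      rw [hAt]
      simp only [ContinuousLinearMap.sub_apply, ContinuousLinearMap.smul_apply,
        ContinuousLinearMap.id_apply, map_sub]
      module
    have hAtnorm : ‖At‖ ≤ c := by
      calc ‖At‖ ≤ ‖ContinuousLinearMap.id ℝ (EuclideanSpace ℝ (Fin M))‖ + ‖α • Ht‖ :=
            norm_sub_le _ _
        _ ≤ 1 + α * L := by
            gcongr
            · exact ContinuousLinearMap.norm_id_le
            · rw [norm_smul, Real.norm_of_nonneg hα.le]
              exact mul_le_mul_of_nonneg_left (hJt_hess t w) hα.le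
    have h1 : ‖At (ut - u)‖ ≤ c * ‖ut - u‖ :=
      le_trans (At.le_opNorm _) (mul_le_mul_of_nonneg_right hAtnorm (norm_nonneg _))
    have h2 : ‖α • ((Ht - H) u)‖ ≤ α * (Hd t * B) := by
      rw [norm_smul, Real.norm_of_nonneg hα.le]
      refine mul_le_mul_of_nonneg_left ?_ hα.le
      exact le_trans ((Ht - H).le_opNorm _)
        (mul_le_mul_of_nonneg_left (hJ_bound u1) (norm_nonneg _))
    have hut : ‖ut - u‖ ≤ α * L * G0 t + G1 t := by
      have htri : ‖ut - u‖ ≤ ‖ut - gradient (Jt t) u1‖ + ‖gradient (Jt t) u1 - u‖ :=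
        norm_sub_le_norm_sub_add_norm_sub _ _ _
      have ha : ‖ut - gradient (Jt t) u1‖ ≤ α * L * G0 t := by
        have := hJt_lip t (w - α • gradient (Jt t) w) u1
        have harg : ‖(w - α • gradient (Jt t) w) - u1‖ = α * G0 t := by
          rw [hu1]
          have : (w - α • gradient (Jt t) w) - (w - α • gradient J w)
              = α • (gradient J w - gradient (Jt t) w) := by module
          rw [this, norm_smul, Real.norm_of_nonneg hα.le, hG0, norm_sub_rev]
        calc ‖ut - gradient (Jt t) u1‖ ≤ L * (α * G0 t) := by rw [← harg]; exact this
          _ = α * L * G0 t := by ring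
      have hb : ‖gradient (Jt t) u1 - u‖ = G1 t := rfl
      linarith
    have hG0n : 0 ≤ G0 t := norm_nonneg _
    have hG1n : 0 ≤ G1 t := norm_nonneg _
    have hHdn : 0 ≤ Hd t := norm_nonneg _
    have hD : ‖At ut - (ContinuousLinearMap.id ℝ (EuclideanSpace ℝ (Fin M)) - α • H) u‖
        ≤ c * (α * L * G0 t + G1 t) + α * (Hd t * B) := by
      rw [hdecomp]
      calc ‖At (ut - u) - α • ((Ht - H) u)‖ ≤ ‖At (ut - u)‖ + ‖α • ((Ht - H) u)‖ :=
            norm_sub_le _ _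
        _ ≤ c * (α * L * G0 t + G1 t) + α * (Hd t * B) := by
            have := mul_le_mul_of_nonneg_left hut hc0
            linarith [h1, h2, this]
    have hDn : 0 ≤ ‖At ut - (ContinuousLinearMap.id ℝ (EuclideanSpace ℝ (Fin M)) - α • H) u‖ :=
      norm_nonneg _
    have hsq := pow_le_pow_left₀ hDn hD 2
    nlinarith [sq_nonneg (c * (α * L * G0 t - G1 t)),
      sq_nonneg (c * (α * L * G0 t + G1 t) - α * (Hd t * B)), hsq]
  -- integrate
  have hFint : Integrable (fun t => 4 * c ^ 2 * α ^ 2 * L ^ 2 * G0 t ^ 2 + 4 * c ^ 2 * G1 t ^ 2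
      + 2 * α ^ 2 * B ^ 2 * Hd t ^ 2) π :=
    (((hG0i.const_mul _).add (hG1i.const_mul _)).add (hHdi.const_mul _))
  have hmono := integral_mono hint hFint hpt
  have hsplit : ∫ t, (4 * c ^ 2 * α ^ 2 * L ^ 2 * G0 t ^ 2 + 4 * c ^ 2 * G1 t ^ 2
        + 2 * α ^ 2 * B ^ 2 * Hd t ^ 2) ∂π
      = 4 * c ^ 2 * α ^ 2 * L ^ 2 * ∫ t, G0 t ^ 2 ∂π
        + 4 * c ^ 2 * ∫ t, G1 t ^ 2 ∂π + 2 * α ^ 2 * B ^ 2 * ∫ t, Hd t ^ 2 ∂π := by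
    have hA : Integrable (fun t => 4 * c ^ 2 * α ^ 2 * L ^ 2 * G0 t ^ 2) π := hG0i.const_mul _
    have hB' : Integrable (fun t => 4 * c ^ 2 * G1 t ^ 2) π := hG1i.const_mul _
    have hC : Integrable (fun t => 2 * α ^ 2 * B ^ 2 * Hd t ^ 2) π := hHdi.const_mul _
    have hAB : Integrable (fun t => 4 * c ^ 2 * α ^ 2 * L ^ 2 * G0 t ^ 2 + 4 * c ^ 2 * G1 t ^ 2) π :=
      hA.add hB'
    rw [integral_add hAB hC, integral_add hA hB',
      MeasureTheory.integral_const_mul, MeasureTheory.integral_const_mul,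
      MeasureTheory.integral_const_mul]
  have hI0 : ∫ t, G0 t ^ 2 ∂π ≤ γG ^ 2 :=
    fourth_moment π G0 γG hγG (fun t => norm_nonneg _) (hvarG_int w) (hvarG w)
  have hI1 : ∫ t, G1 t ^ 2 ∂π ≤ γG ^ 2 :=
    fourth_moment π G1 γG hγG (fun t => norm_nonneg _) (hvarG_int u1) (hvarG u1)
  have hI2 : ∫ t, Hd t ^ 2 ∂π ≤ γH ^ 2 :=
    fourth_moment π Hd γH hγH (fun t => norm_nonneg _) (hvarH_int w) (hvarH w)
  have hc2 : (0:ℝ) ≤ c ^ 2 := sq_nonneg _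
  have final : 4 * c ^ 2 * α ^ 2 * L ^ 2 * γG ^ 2 + 4 * c ^ 2 * γG ^ 2
      + 2 * α ^ 2 * B ^ 2 * γH ^ 2
      ≤ 8 * (1 + α * L) ^ 2 * (1 + α ^ 2 * L ^ 2) * γG ^ 2
        + 4 * B ^ 2 * α ^ 2 * γH ^ 2 + 2 * α ^ 4 * γH ^ 4
        + 16 * (1 + α ^ 4 * L ^ 4) * γG ^ 4 := by
    rw [hc]
    have e1 : (0:ℝ) ≤ 4 * (1 + α * L) ^ 2 * (1 + α ^ 2 * L ^ 2) * γG ^ 2 := by positivity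
    have e2 : (0:ℝ) ≤ 2 * B ^ 2 * α ^ 2 * γH ^ 2 := by positivity
    have e3 : (0:ℝ) ≤ 2 * α ^ 4 * γH ^ 4 := by positivity
    have e4 : (0:ℝ) ≤ 16 * (1 + α ^ 4 * L ^ 4) * γG ^ 4 := by positivity
    nlinarith [e1, e2, e3, e4]
  calc _ ≤ _ := hmono
    _ = _ := hsplit
    _ ≤ 4 * c ^ 2 * α ^ 2 * L ^ 2 * γG ^ 2 + 4 * c ^ 2 * γG ^ 2
        + 2 * α ^ 2 * B ^ 2 * γH ^ 2 := by
        gcongr <;> positivity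
    _ ≤ _ := final
end

section
/- Let 𝒲⁺ = (Aᵀ ⊗ I_M)(𝒲 − μg). Then ‖𝒲⁺ − P𝒲⁺‖² ≤ λ₂ ‖𝒲 − P𝒲‖² + μ² (λ₂²/(1 − λ₂)) ‖g‖². (This is the single-step network-disagreement inequality, equation (51) in the proof of Theorem 1, stating that one adapt-and-combine diffusion step contracts the deviation from the network centroid up to a gradient-dependent perturbation.) -/
open MeasureTheory Finset Matrix

/-!
Because `A` is doubly stochastic, centring commutes with the combine step: the deviation of
`𝒲⁺` from its centroid is `(Aᵀ − 𝟙𝟙ᵀ/K) ⊗ I_M` applied to the deviation of `𝒲 − μg`, so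
blockwise it is at most `λ₂²` times that deviation. Splitting the latter into the deviations of
`𝒲` and of `μg` with the weighted Young inequality `‖a − b‖² ≤ λ₂⁻¹‖a‖² + (1 − λ₂)⁻¹‖b‖²`, and
using that centring does not increase `Σₖ ‖gₖ‖²`, gives the bound.
-/

section
variable {ι E : Type*} [Fintype ι] [AddCommGroup E] [Module ℝ E]

theorem sum_smul_sub_eq_of_sum_eq_zero {R M : Type*} [Ring R] [AddCommGroup M]
    [Module R M] {b : ι → R} (hb : ∑ i, b i = 0) (x : ι → M) (c : M) :
    ∑ i, b i • (x i - c) = ∑ i, b i • x i := by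
  simp [smul_sub, sum_sub_distrib, ← sum_smul, hb]

theorem combine_sub_centroid_eq [Nonempty ι] {A : Matrix ι ι ℝ}
    (hA_row : ∀ k, ∑ l, A k l = 1) (hA_col : ∀ l, ∑ k, A k l = 1) (x : ι → E) (k : ι) :
    ∑ l, A l k • x l - (Fintype.card ι : ℝ)⁻¹ • ∑ j, ∑ l, A l j • x l
      = ∑ l, (Aᵀ - (Fintype.card ι : ℝ)⁻¹ • of fun _ _ => (1 : ℝ) : Matrix ι ι ℝ) k l
          • (x l - (Fintype.card ι : ℝ)⁻¹ • ∑ j, x j) := by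
  have hn : (Fintype.card ι : ℝ) ≠ 0 := Nat.cast_ne_zero.mpr Fintype.card_ne_zero
  have hrow :
      ∑ l, (Aᵀ - (Fintype.card ι : ℝ)⁻¹ • of fun _ _ => (1 : ℝ) : Matrix ι ι ℝ) k l = 0 := by
    simp [sum_sub_distrib, hA_col, hn]
  have hcollapse : ∑ j, ∑ l, A l j • x l = ∑ l, x l := by
    rw [sum_comm]; simp [← sum_smul, hA_row]
  rw [sum_smul_sub_eq_of_sum_eq_zero hrow, hcollapse]
  simp [sub_smul, sum_sub_distrib, ← smul_sum]

end

section
variable {ι E : Type*} [Fintype ι] [NormedAddCommGroup E] [InnerProductSpace ℝ E]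

theorem sum_norm_sub_centroid_sq (v : ι → E) :
    ∑ i, ‖v i - (Fintype.card ι : ℝ)⁻¹ • ∑ j, v j‖ ^ 2
      = ∑ i, ‖v i‖ ^ 2 - (Fintype.card ι : ℝ)⁻¹ * ‖∑ j, v j‖ ^ 2 := by
  set n : ℝ := (Fintype.card ι : ℝ)
  simp_rw [norm_sub_sq_real, sum_add_distrib, sum_sub_distrib, ← mul_sum, ← sum_inner,
    sum_const, card_univ, nsmul_eq_mul, real_inner_smul_right, real_inner_self_eq_norm_sq,
    norm_smul, mul_pow, Real.norm_eq_abs, sq_abs]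
  have : n * (n⁻¹ ^ 2 * ‖∑ j, v j‖ ^ 2) = n⁻¹ * ‖∑ j, v j‖ ^ 2 := by
    have hn : n * n⁻¹ * n⁻¹ = n⁻¹ := by simpa using inv_mul_mul_self n⁻¹
    rw [← mul_assoc, sq, ← mul_assoc, hn]
  rw [this]; ring

theorem sum_norm_sub_centroid_sq_le (v : ι → E) :
    ∑ i, ‖v i - (Fintype.card ι : ℝ)⁻¹ • ∑ j, v j‖ ^ 2 ≤ ∑ i, ‖v i‖ ^ 2 := by
  rw [sum_norm_sub_centroid_sq]
  have : 0 ≤ (Fintype.card ι : ℝ)⁻¹ * ‖∑ j, v j‖ ^ 2 := by positivity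
  linarith

end

theorem sq_mul_norm_sub_sq_le {E : Type*} [SeminormedAddCommGroup E] {t : ℝ} (ht0 : 0 ≤ t)
    (ht1 : t < 1) (a b : E) : t ^ 2 * ‖a - b‖ ^ 2 ≤ t * ‖a‖ ^ 2 + t ^ 2 / (1 - t) * ‖b‖ ^ 2 := by
  have ht1' : 0 < 1 - t := by linarith
  have key : t ^ 2 * (‖a‖ + ‖b‖) ^ 2 ≤ t * ‖a‖ ^ 2 + t ^ 2 / (1 - t) * ‖b‖ ^ 2 := by
    have gap : t * ‖a‖ ^ 2 + t ^ 2 / (1 - t) * ‖b‖ ^ 2 - t ^ 2 * (‖a‖ + ‖b‖) ^ 2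
        = t * ((1 - t) * ‖a‖ - t * ‖b‖) ^ 2 / (1 - t) := by
      field_simp; ring
    have : 0 ≤ t * ((1 - t) * ‖a‖ - t * ‖b‖) ^ 2 / (1 - t) := by positivity
    linarith
  calc t ^ 2 * ‖a - b‖ ^ 2 ≤ t ^ 2 * (‖a‖ + ‖b‖) ^ 2 := by gcongr; exact norm_sub_le a b
    _ ≤ _ := key

theorem sum_norm_sum_smul_sq_le {n κ : Type*} [Fintype n] [DecidableEq n] [Fintype κ]
    (B : Matrix n n ℝ) (y : n → EuclideanSpace ℝ κ) :
    ∑ k, ‖∑ l, B k l • y l‖ ^ 2 ≤ ‖toEuclideanCLM (𝕜 := ℝ) B‖ ^ 2 * ∑ l, ‖y l‖ ^ 2 := by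
  let col : κ → EuclideanSpace ℝ n := fun m => WithLp.toLp 2 fun l => y l m
  have hcol : ∀ m, ‖toEuclideanCLM (𝕜 := ℝ) B (col m)‖ ^ 2 ≤
      ‖toEuclideanCLM (𝕜 := ℝ) B‖ ^ 2 * ‖col m‖ ^ 2 := fun m => by
    rw [← mul_pow]; gcongr; exact ContinuousLinearMap.le_opNorm _ _
  calc ∑ k, ‖∑ l, B k l • y l‖ ^ 2
      = ∑ m, ‖toEuclideanCLM (𝕜 := ℝ) B (col m)‖ ^ 2 := by
        simp only [EuclideanSpace.real_norm_sq_eq, col, toEuclideanCLM_toLp]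
        rw [sum_comm]
        simp [mulVec, dotProduct]
    _ ≤ ∑ m, ‖toEuclideanCLM (𝕜 := ℝ) B‖ ^ 2 * ‖col m‖ ^ 2 := sum_le_sum fun m _ => hcol m
    _ = ‖toEuclideanCLM (𝕜 := ℝ) B‖ ^ 2 * ∑ l, ‖y l‖ ^ 2 := by
        simp_rw [← mul_sum, EuclideanSpace.real_norm_sq_eq, col]
        rw [sum_comm]

/-- Block `k` of `𝒲⁺` is `Σ_ℓ A_{ℓk}(𝒲_ℓ − μ g_ℓ)`, and the squared Euclidean norm on `ℝ^{KM}`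
is the sum of the squared block norms. -/
theorem single_step_network_disagreement_general
    (K M : ℕ) (hK : 0 < K) (μ lam2 : ℝ)
    (A : Matrix (Fin K) (Fin K) ℝ)
    (hA_row : ∀ k, ∑ l, A k l = 1)
    (hA_col : ∀ l, ∑ k, A k l = 1)
    (hlam : lam2 = ‖Matrix.toEuclideanCLM (𝕜 := ℝ)
      ((Aᵀ - (K : ℝ)⁻¹ • Matrix.of (fun _ _ => (1 : ℝ))) : Matrix (Fin K) (Fin K) ℝ)‖)
    (hlam_lt : lam2 < 1)
    (W g : Fin K → EuclideanSpace ℝ (Fin M)) :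
    (∑ k, ‖(∑ l, A l k • (W l - μ • g l))
        - (K : ℝ)⁻¹ • ∑ j, ∑ l, A l j • (W l - μ • g l)‖ ^ 2)
      ≤ lam2 * (∑ k, ‖W k - (K : ℝ)⁻¹ • ∑ j, W j‖ ^ 2)
        + μ ^ 2 * (lam2 ^ 2 / (1 - lam2)) * ∑ k, ‖g k‖ ^ 2 := by
  have : Nonempty (Fin K) := Fin.pos_iff_nonempty.mp hK
  have hlam_nonneg : 0 ≤ lam2 := hlam ▸ norm_nonneg _
  set B : Matrix (Fin K) (Fin K) ℝ := Aᵀ - (K : ℝ)⁻¹ • of fun _ _ => (1 : ℝ)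
  set cW := (K : ℝ)⁻¹ • ∑ j, W j
  set cg := (K : ℝ)⁻¹ • ∑ j, g j
  have hcenter : ∀ l, (W l - μ • g l) - (K : ℝ)⁻¹ • ∑ j, (W j - μ • g j)
      = (W l - cW) - μ • (g l - cg) := fun l => by
    simp only [cW, cg, sum_sub_distrib, ← smul_sum]; module
  calc _ = ∑ k, ‖∑ l, B k l • ((W l - cW) - μ • (g l - cg))‖ ^ 2 := by
        refine sum_congr rfl fun k _ => ?_
        have hk := combine_sub_centroid_eq hA_row hA_col (fun l => W l - μ • g l) k
        rw [Fintype.card_fin] at hk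
        simp only [hk, hcenter, B]
    _ ≤ lam2 ^ 2 * ∑ l, ‖(W l - cW) - μ • (g l - cg)‖ ^ 2 :=
        hlam ▸ sum_norm_sum_smul_sq_le B _
    _ ≤ ∑ l, (lam2 * ‖W l - cW‖ ^ 2 + lam2 ^ 2 / (1 - lam2) * ‖μ • (g l - cg)‖ ^ 2) := by
        rw [mul_sum]
        gcongr with l
        exact sq_mul_norm_sub_sq_le hlam_nonneg hlam_lt _ _
    _ = lam2 * ∑ l, ‖W l - cW‖ ^ 2
          + μ ^ 2 * (lam2 ^ 2 / (1 - lam2)) * ∑ l, ‖g l - cg‖ ^ 2 := by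
        simp only [norm_smul, mul_pow, Real.norm_eq_abs, sq_abs, sum_add_distrib, mul_sum]
        congr 1; refine sum_congr rfl fun l _ => by ring
    _ ≤ _ := by
        have hg := sum_norm_sub_centroid_sq_le g
        rw [Fintype.card_fin] at hg
        gcongr

/-- **Single-step network-disagreement inequality (equation (51) of Dif-MAML).**
One adapt-and-combine diffusion step `𝒲⁺ = (Aᵀ ⊗ I_M)(𝒲 − μg)` contracts the deviation from
the network centroid up to a gradient-dependent perturbation. Block `k` of `𝒲⁺` is
`Σ_ℓ A_{ℓk}(𝒲_ℓ − μ g_ℓ)`, and the squared Euclidean norm on `ℝ^{KM}` is the sum of the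
squared block norms. -/
theorem single_step_network_disagreement
    (K M : ℕ) (hK : 0 < K) (μ lam2 : ℝ) (hμ : 0 < μ)
    (A : Matrix (Fin K) (Fin K) ℝ)
    (hA_nonneg : ∀ k l, 0 ≤ A k l)
    (hA_row : ∀ k, ∑ l, A k l = 1)
    (hA_col : ∀ l, ∑ k, A k l = 1)
    (hlam : lam2 = ‖Matrix.toEuclideanCLM (𝕜 := ℝ)
      ((Aᵀ - (K : ℝ)⁻¹ • Matrix.of (fun _ _ => (1 : ℝ))) : Matrix (Fin K) (Fin K) ℝ)‖)
    (hlam_pos : 0 < lam2) (hlam_lt : lam2 < 1)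
    (W g : Fin K → EuclideanSpace ℝ (Fin M)) :
    (∑ k, ‖(∑ l, A l k • (W l - μ • g l))
        - (K : ℝ)⁻¹ • ∑ j, ∑ l, A l j • (W l - μ • g l)‖ ^ 2)
      ≤ lam2 * (∑ k, ‖W k - (K : ℝ)⁻¹ • ∑ j, W j‖ ^ 2)
        + μ ^ 2 * (lam2 ^ 2 / (1 - lam2)) * ∑ k, ‖g k‖ ^ 2 :=
  single_step_network_disagreement_general K M hK μ lam2 A hA_row hA_col hlam hlam_lt W g
end

section
/- Define the disagreement perturbation d_{i−1} = (1/K) Σ_{k=1}^K ( h_k(𝒲_{k,i−1}) − h_k(w_{c,i−1}) ). Then for every i ≥ 1: E ‖d_{i−1}‖² ≤ (L̂²/K) · [ λ₂^{i−1} Σ_{k=1}^K ‖𝒲_{k,0} − w_{c,0}‖² + μ² (λ₂²/(1 − λ₂)²) K (B̂² + C²) ]. (This is the first half of the paper's perturbation-bounds lemma, Lemma 8, bounding the deviation of the network update from an exact centroid gradient step.) -/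
/-!
Lipschitz continuity of the `h_k` bounds `‖d_i‖²` pointwise by `L̂²/K` times the disagreement
`Σ_k ‖𝒲_{k,i} - w_{c,i}‖²`, so it suffices to bound `S_i = Σ_k E‖𝒲_{k,i} - w_{c,i}‖²`.
Because `A` is doubly stochastic, the deviations from the centroid are propagated by the centering
matrix `Aᵀ - 𝟙𝟙ᵀ/K`, whose norm is `λ₂`. Writing `ĝ = h(𝒲) + noise`, the drift part is
`ℱ_i`-measurable while the noise has zero conditional mean, so the cross term vanishes in
expectation. Young's inequality with weights `λ₂` and `1 - λ₂` absorbs the bounded drift `μ h`,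
giving `S_{i+1} ≤ λ₂ S_i + μ² λ₂² K (B̂² + C²) / (1 - λ₂)`, which unrolls to the claim.
-/

open MeasureTheory Matrix
open scoped InnerProductSpace

theorem sq_mul_add_le_of_lt_one {lam : ℝ} (h0 : 0 ≤ lam) (h1 : lam < 1) (a b : ℝ) :
    lam ^ 2 * (a + b) ^ 2 ≤ lam * a ^ 2 + lam ^ 2 / (1 - lam) * b ^ 2 := by
  have h1' : 0 < 1 - lam := sub_pos.2 h1
  rw [div_mul_eq_mul_div, ← sub_nonneg]
  have key : lam * a ^ 2 + lam ^ 2 * b ^ 2 / (1 - lam) - lam ^ 2 * (a + b) ^ 2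
      = lam * ((1 - lam) * a - lam * b) ^ 2 / (1 - lam) := by
    field_simp
    ring
  rw [key]
  positivity

theorem le_pow_mul_add_div_of_le_mul_add {S : ℕ → ℝ} {lam c : ℝ} (h0 : 0 ≤ lam) (h1 : lam < 1)
    (hc : 0 ≤ c) (hS : ∀ i, S (i + 1) ≤ lam * S i + c) (i : ℕ) :
    S i ≤ lam ^ i * S 0 + c / (1 - lam) := by
  have h1' : 0 < 1 - lam := sub_pos.2 h1
  induction i with
  | zero => simpa using div_nonneg hc h1'.le
  | succ n ih =>
    calc S (n + 1) ≤ lam * (lam ^ n * S 0 + c / (1 - lam)) + c :=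
          (hS n).trans (by gcongr)
      _ = lam ^ (n + 1) * S 0 + c / (1 - lam) := by field_simp; ring

theorem norm_inv_card_smul_sum_sq_le {ι E : Type*} [Fintype ι] [SeminormedAddCommGroup E]
    [NormedSpace ℝ E] (x : ι → E) :
    ‖(Fintype.card ι : ℝ)⁻¹ • ∑ i, x i‖ ^ 2 ≤ (Fintype.card ι : ℝ)⁻¹ * ∑ i, ‖x i‖ ^ 2 := by
  set c : ℝ := (Fintype.card ι : ℝ)
  have hsum : (∑ i, ‖x i‖) ^ 2 ≤ c * ∑ i, ‖x i‖ ^ 2 := by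
    simpa using sq_sum_le_card_mul_sum_sq (s := Finset.univ) (f := fun i => ‖x i‖)
  calc ‖c⁻¹ • ∑ i, x i‖ ^ 2 = c⁻¹ ^ 2 * ‖∑ i, x i‖ ^ 2 := by
        rw [norm_smul, mul_pow, Real.norm_of_nonneg (by positivity)]
    _ ≤ c⁻¹ ^ 2 * (c * ∑ i, ‖x i‖ ^ 2) := by
        gcongr
        exact (pow_le_pow_left₀ (norm_nonneg _) (norm_sum_le _ _) 2).trans hsum
    _ = c⁻¹ * c⁻¹⁻¹ * c⁻¹ * ∑ i, ‖x i‖ ^ 2 := by rw [inv_inv]; ring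
    _ = c⁻¹ * ∑ i, ‖x i‖ ^ 2 := by rw [mul_inv_mul_cancel]

theorem norm_inv_card_smul_sum_sub_sq_le {ι E F : Type*} [Fintype ι] [SeminormedAddCommGroup E]
    [SeminormedAddCommGroup F] [NormedSpace ℝ F] {h : ι → E → F} {L : ℝ}
    (hh : ∀ k u v, ‖h k u - h k v‖ ≤ L * ‖u - v‖) (x : ι → E) (c : E) :
    ‖(Fintype.card ι : ℝ)⁻¹ • ∑ k, (h k (x k) - h k c)‖ ^ 2
      ≤ L ^ 2 / Fintype.card ι * ∑ k, ‖x k - c‖ ^ 2 := by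
  calc _ ≤ (Fintype.card ι : ℝ)⁻¹ * ∑ k, ‖h k (x k) - h k c‖ ^ 2 :=
        norm_inv_card_smul_sum_sq_le _
    _ ≤ (Fintype.card ι : ℝ)⁻¹ * ∑ k, (L * ‖x k - c‖) ^ 2 := by
        gcongr with k
        exact hh k _ _
    _ = L ^ 2 / Fintype.card ι * ∑ k, ‖x k - c‖ ^ 2 := by
        simp_rw [mul_pow, ← Finset.mul_sum]
        ring

theorem sum_norm_sq_sum_smul_le {ι n : Type*} [Fintype ι] [DecidableEq ι] [Fintype n]
    (B : Matrix ι ι ℝ) (v : ι → EuclideanSpace ℝ n) :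
    ∑ k, ‖∑ l, B k l • v l‖ ^ 2 ≤ ‖toEuclideanCLM (𝕜 := ℝ) B‖ ^ 2 * ∑ l, ‖v l‖ ^ 2 := by
  let col : n → EuclideanSpace ℝ ι := fun m => WithLp.toLp 2 fun l => v l m
  have hcol : ∀ m, ‖toEuclideanCLM (𝕜 := ℝ) B (col m)‖ ^ 2 = ∑ k, (∑ l, B k l • v l) m ^ 2 := by
    intro m
    simp [col, EuclideanSpace.real_norm_sq_eq, mulVec, dotProduct]
  calc ∑ k, ‖∑ l, B k l • v l‖ ^ 2 = ∑ m, ‖toEuclideanCLM (𝕜 := ℝ) B (col m)‖ ^ 2 := by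
        simp_rw [hcol, EuclideanSpace.real_norm_sq_eq]
        exact Finset.sum_comm
    _ ≤ ∑ m, ‖toEuclideanCLM (𝕜 := ℝ) B‖ ^ 2 * ‖col m‖ ^ 2 := by
        gcongr with m
        rw [← mul_pow]
        exact pow_le_pow_left₀ (norm_nonneg _) ((toEuclideanCLM (𝕜 := ℝ) B).le_opNorm _) 2
    _ = ‖toEuclideanCLM (𝕜 := ℝ) B‖ ^ 2 * ∑ l, ‖v l‖ ^ 2 := by
        simp_rw [← Finset.mul_sum, EuclideanSpace.real_norm_sq_eq, col]
        rw [Finset.sum_comm]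

noncomputable def deviation {ι E : Type*} [Fintype ι] [AddCommGroup E] [Module ℝ E]
    (x : ι → E) (k : ι) : E :=
  x k - (Fintype.card ι : ℝ)⁻¹ • ∑ j, x j

theorem deviation_sum_smul_sub_smul_eq {ι E : Type*} [Fintype ι] [AddCommGroup E] [Module ℝ E]
    {A : Matrix ι ι ℝ} (hrow : ∀ l, ∑ k, A l k = 1) (hcol : ∀ k, ∑ l, A l k = 1)
    (x g : ι → E) (μ : ℝ) (k : ι) :
    deviation (fun k => ∑ l, A l k • (x l - μ • g l)) k
      = ∑ l, (Aᵀ - (Fintype.card ι : ℝ)⁻¹ • of fun _ _ => (1 : ℝ) : Matrix ι ι ℝ) k l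
          • (deviation x l - μ • g l) := by
  have hK : (Fintype.card ι : ℝ) ≠ 0 := Nat.cast_ne_zero.2 (Fintype.card_pos_iff.2 ⟨k⟩).ne'
  have hmix : ∀ z : ι → E, ∑ j, ∑ l, A l j • z l = ∑ l, z l := fun z => by
    rw [Finset.sum_comm]
    simp_rw [← Finset.sum_smul, hrow, one_smul]
  simp only [deviation, hmix, Matrix.sub_apply, transpose_apply, Matrix.smul_apply, of_apply,
    smul_eq_mul, mul_one, sub_smul, smul_sub, Finset.sum_sub_distrib, ← Finset.sum_smul, hcol,
    one_smul, Finset.sum_const, Finset.card_univ, ← Finset.smul_sum]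
  rw [nsmul_eq_mul, mul_inv_cancel₀ hK, one_smul]
  abel

theorem stronglyMeasurable_deviation {Ω ι E : Type*} [Fintype ι] [NormedAddCommGroup E]
    [NormedSpace ℝ E] {m : MeasurableSpace Ω} {x : ι → Ω → E}
    (hx : ∀ l, StronglyMeasurable[m] (x l)) (k : ι) :
    StronglyMeasurable[m] fun ω => deviation (x · ω) k :=
  (hx k).sub ((Finset.stronglyMeasurable_fun_sum _ fun j _ => hx j).fun_const_smul _)

theorem integral_norm_sq_inv_card_smul_sum_sub_le {Ω ι E F : Type*} [Fintype ι]
    [NormedAddCommGroup E] [NormedSpace ℝ E] [SeminormedAddCommGroup F] [NormedSpace ℝ F]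
    [MeasurableSpace Ω] {P : Measure Ω} {h : ι → E → F} {L : ℝ}
    (hh : ∀ k u v, ‖h k u - h k v‖ ≤ L * ‖u - v‖) {x : ι → Ω → E}
    (hdev : ∀ k, MemLp (fun ω => deviation (x · ω) k) 2 P) :
    ∫ ω, ‖(Fintype.card ι : ℝ)⁻¹
        • ∑ k, (h k (x k ω) - h k ((Fintype.card ι : ℝ)⁻¹ • ∑ j, x j ω))‖ ^ 2 ∂P
      ≤ L ^ 2 / Fintype.card ι * ∑ k, ∫ ω, ‖deviation (x · ω) k‖ ^ 2 ∂P := by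
  have hdev2 : ∀ k, Integrable (fun ω => ‖deviation (x · ω) k‖ ^ 2) P := fun k =>
    (memLp_two_iff_integrable_sq_norm (hdev k).1).1 (hdev k)
  rw [← integral_finsetSum _ fun k _ => hdev2 k, ← integral_const_mul]
  exact integral_mono_of_nonneg (.of_forall fun _ => by positivity)
    ((integrable_finsetSum _ fun k _ => hdev2 k).const_mul _)
    (.of_forall fun ω => norm_inv_card_smul_sum_sub_sq_le hh (x · ω) _)

section Conditioning

variable {Ω E : Type*} [NormedAddCommGroup E] [InnerProductSpace ℝ E]
  {m m0 : MeasurableSpace Ω} {P : Measure[m0] Ω}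

theorem MeasureTheory.MemLp.integrable_inner {Y Z : Ω → E} (hY : MemLp Y 2 P) (hZ : MemLp Z 2 P) :
    Integrable (fun ω => ⟪Y ω, Z ω⟫_ℝ) P :=
  (L2.integrable_inner (𝕜 := ℝ) (hY.toLp Y) (hZ.toLp Z)).congr <| by
    filter_upwards [hY.coeFn_toLp, hZ.coeFn_toLp] with ω hYω hZω
    rw [hYω, hZω]

variable [CompleteSpace E] [IsFiniteMeasure P]

theorem integral_inner_eq_zero_of_condExp_eq_zero (hm : m ≤ m0) {Y Z : Ω → E}
    (hY : StronglyMeasurable[m] Y) (hYZ : Integrable (fun ω => ⟪Y ω, Z ω⟫_ℝ) P)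
    (hZ : Integrable Z P) (hZ0 : P[Z|m] =ᵐ[P] 0) :
    ∫ ω, ⟪Y ω, Z ω⟫_ℝ ∂P = 0 := by
  have hpull := condExp_bilin_of_stronglyMeasurable_left (innerSL ℝ) hY hYZ hZ
  calc ∫ ω, ⟪Y ω, Z ω⟫_ℝ ∂P = ∫ ω, (P[fun ω => ⟪Y ω, Z ω⟫_ℝ|m]) ω ∂P :=
        (integral_condExp hm).symm
    _ = ∫ ω, ⟪Y ω, (P[Z|m]) ω⟫_ℝ ∂P := integral_congr_ae hpull
    _ = 0 := by
        rw [integral_congr_ae (g := fun _ => 0) (hZ0.mono fun ω hω => by simp [hω])]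
        simp

theorem integral_norm_sub_smul_sq_eq (hm : m ≤ m0) {Y Z : Ω → E}
    (hY : StronglyMeasurable[m] Y) (hY2 : MemLp Y 2 P) (hZ2 : MemLp Z 2 P)
    (hZ0 : P[Z|m] =ᵐ[P] 0) (μ : ℝ) :
    ∫ ω, ‖Y ω - μ • Z ω‖ ^ 2 ∂P = ∫ ω, ‖Y ω‖ ^ 2 ∂P + μ ^ 2 * ∫ ω, ‖Z ω‖ ^ 2 ∂P := by
  have hYZ := hY2.integrable_inner hZ2
  have hcross := integral_inner_eq_zero_of_condExp_eq_zero hm hY hYZ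
    (hZ2.integrable one_le_two) hZ0
  have hexpand : ∀ ω, ‖Y ω - μ • Z ω‖ ^ 2
      = ‖Y ω‖ ^ 2 - 2 * μ * ⟪Y ω, Z ω⟫_ℝ + μ ^ 2 * ‖Z ω‖ ^ 2 := fun ω => by
    rw [norm_sub_sq_real, real_inner_smul_right, norm_smul, mul_pow, Real.norm_eq_abs, sq_abs]
    ring
  have hY2' := (memLp_two_iff_integrable_sq_norm hY2.1).1 hY2
  have hZ2' := (memLp_two_iff_integrable_sq_norm hZ2.1).1 hZ2
  simp_rw [hexpand]
  rw [integral_add (f := fun ω => ‖Y ω‖ ^ 2 - 2 * μ * ⟪Y ω, Z ω⟫_ℝ)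
      (hY2'.sub (hYZ.const_mul _)) (hZ2'.const_mul _),
    integral_sub hY2' (hYZ.const_mul _), integral_const_mul, integral_const_mul, hcross]
  ring

end Conditioning

section Noise

variable {Ω E : Type*} [NormedAddCommGroup E] [NormedSpace ℝ E] [CompleteSpace E]
  {m m0 : MeasurableSpace Ω} {P : Measure[m0] Ω}

theorem condExp_sub_ae_eq_zero (hm : m ≤ m0) [SigmaFinite (P.trim hm)] {g H : Ω → E}
    (hg : Integrable g P) (hH : StronglyMeasurable[m] H) (hHi : Integrable H P)
    (hgH : P[g|m] =ᵐ[P] H) : P[g - H|m] =ᵐ[P] 0 := by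
  filter_upwards [condExp_sub hg hHi m, hgH] with ω hsub hω
  rw [hsub, Pi.sub_apply, hω, condExp_of_stronglyMeasurable hm hH hHi, sub_self, Pi.zero_apply]

theorem integral_le_of_ae_condExp_le [IsProbabilityMeasure P] (hm : m ≤ m0) {f : Ω → ℝ}
    {c : ℝ} (hf : ∀ᵐ ω ∂P, (P[f|m]) ω ≤ c) : ∫ ω, f ω ∂P ≤ c := by
  rw [← integral_condExp hm]
  simpa using integral_mono_ae integrable_condExp (integrable_const c) hf

end Noise

section Mixing

variable {Ω ι n : Type*} [Fintype ι] [DecidableEq ι] [Fintype n]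
  {m m0 : MeasurableSpace Ω} {P : Measure[m0] Ω}

theorem sum_integral_norm_sq_sum_smul_le (B : Matrix ι ι ℝ) {X : ι → Ω → EuclideanSpace ℝ n}
    (hX : ∀ l, MemLp (X l) 2 P) :
    ∑ k, ∫ ω, ‖∑ l, B k l • X l ω‖ ^ 2 ∂P
      ≤ ‖toEuclideanCLM (𝕜 := ℝ) B‖ ^ 2 * ∑ l, ∫ ω, ‖X l ω‖ ^ 2 ∂P := by
  have hXsq : ∀ l, Integrable (fun ω => ‖X l ω‖ ^ 2) P := fun l =>
    (memLp_two_iff_integrable_sq_norm (hX l).1).1 (hX l)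
  have hmix : ∀ k, MemLp (fun ω => ∑ l, B k l • X l ω) 2 P := fun k =>
    memLp_finsetSum _ fun l _ => (hX l).const_smul (B k l)
  have hmixsq : ∀ k, Integrable (fun ω => ‖∑ l, B k l • X l ω‖ ^ 2) P := fun k =>
    (memLp_two_iff_integrable_sq_norm (hmix k).1).1 (hmix k)
  rw [← integral_finsetSum _ fun k _ => hmixsq k, ← integral_finsetSum _ fun l _ => hXsq l,
    ← integral_const_mul]
  exact integral_mono (integrable_finsetSum _ fun k _ => hmixsq k)
    ((integrable_finsetSum _ fun l _ => hXsq l).const_mul _)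
    fun ω => sum_norm_sq_sum_smul_le B _

theorem sum_integral_norm_sq_sum_smul_sub_smul_le [IsFiniteMeasure P] (hm : m ≤ m0)
    (B : Matrix ι ι ℝ) {X ξ : ι → Ω → EuclideanSpace ℝ n} (hX : ∀ l, StronglyMeasurable[m] (X l))
    (hX2 : ∀ l, MemLp (X l) 2 P) (hξ2 : ∀ l, MemLp (ξ l) 2 P) (hξ0 : ∀ l, P[ξ l|m] =ᵐ[P] 0)
    (μ : ℝ) :
    ∑ k, ∫ ω, ‖∑ l, B k l • (X l ω - μ • ξ l ω)‖ ^ 2 ∂P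
      ≤ ‖toEuclideanCLM (𝕜 := ℝ) B‖ ^ 2
        * (∑ l, ∫ ω, ‖X l ω‖ ^ 2 ∂P + μ ^ 2 * ∑ l, ∫ ω, ‖ξ l ω‖ ^ 2 ∂P) := by
  have hsplit : ∀ k ω, ∑ l, B k l • (X l ω - μ • ξ l ω)
      = ∑ l, B k l • X l ω - μ • ∑ l, B k l • ξ l ω := fun k ω => by
    simp only [smul_sub, Finset.sum_sub_distrib, Finset.smul_sum, smul_comm μ]
  have hZ0 : ∀ k, P[fun ω => ∑ l, B k l • ξ l ω|m] =ᵐ[P] 0 := fun k => by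
    have hsum : (fun ω => ∑ l, B k l • ξ l ω) = ∑ l, B k l • ξ l := by
      ext1 ω; simp only [Finset.sum_apply, Pi.smul_apply]
    rw [hsum]
    refine (condExp_finsetSum (fun l _ => ((hξ2 l).integrable one_le_two).smul (B k l)) m).trans ?_
    filter_upwards [ae_all_iff.2 fun l =>
      (condExp_smul (B k l) (ξ l) m).trans ((hξ0 l).const_smul (B k l))] with ω hω
    simp [Finset.sum_apply, hω]
  have horth : ∀ k, ∫ ω, ‖∑ l, B k l • (X l ω - μ • ξ l ω)‖ ^ 2 ∂P
      = ∫ ω, ‖∑ l, B k l • X l ω‖ ^ 2 ∂P + μ ^ 2 * ∫ ω, ‖∑ l, B k l • ξ l ω‖ ^ 2 ∂P :=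
    fun k => by
      simp_rw [hsplit k]
      exact integral_norm_sub_smul_sq_eq hm
        (Finset.stronglyMeasurable_fun_sum _ fun l _ => (hX l).const_smul (B k l))
        (memLp_finsetSum _ fun l _ => (hX2 l).const_smul (B k l))
        (memLp_finsetSum _ fun l _ => (hξ2 l).const_smul (B k l)) (hZ0 k) μ
  simp_rw [horth, Finset.sum_add_distrib, ← Finset.mul_sum]
  have hY := sum_integral_norm_sq_sum_smul_le B hX2
  have hZ := mul_le_mul_of_nonneg_left (sum_integral_norm_sq_sum_smul_le B hξ2) (sq_nonneg μ)
  linarith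

end Mixing

theorem integral_norm_sq_sub_smul_le_of_norm_le {Ω E : Type*} [NormedAddCommGroup E]
    [NormedSpace ℝ E] [MeasurableSpace Ω] {P : Measure Ω} [IsProbabilityMeasure P]
    {lam : ℝ} (h0 : 0 ≤ lam) (h1 : lam < 1) {D H : Ω → E} {B : ℝ} (hD : MemLp D 2 P)
    (hH : AEStronglyMeasurable H P) (hHB : ∀ ω, ‖H ω‖ ≤ B) (μ : ℝ) :
    lam ^ 2 * ∫ ω, ‖D ω - μ • H ω‖ ^ 2 ∂P
      ≤ lam * ∫ ω, ‖D ω‖ ^ 2 ∂P + lam ^ 2 / (1 - lam) * (μ * B) ^ 2 := by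
  have hH2 : MemLp H 2 P := .of_bound hH B (.of_forall hHB)
  have hDH := hD.sub (hH2.const_smul μ)
  have hpt : ∀ ω, lam ^ 2 * ‖D ω - μ • H ω‖ ^ 2
      ≤ lam * ‖D ω‖ ^ 2 + lam ^ 2 / (1 - lam) * (μ * B) ^ 2 := fun ω => by
    have htri : ‖D ω - μ • H ω‖ ≤ ‖D ω‖ + |μ| * B := by
      refine (norm_sub_le _ _).trans ?_
      rw [norm_smul, Real.norm_eq_abs]
      gcongr
      exact hHB ω
    calc lam ^ 2 * ‖D ω - μ • H ω‖ ^ 2 ≤ lam ^ 2 * (‖D ω‖ + |μ| * B) ^ 2 := by gcongr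
      _ ≤ lam * ‖D ω‖ ^ 2 + lam ^ 2 / (1 - lam) * (|μ| * B) ^ 2 :=
          sq_mul_add_le_of_lt_one h0 h1 _ _
      _ = lam * ‖D ω‖ ^ 2 + lam ^ 2 / (1 - lam) * (μ * B) ^ 2 := by rw [mul_pow, sq_abs, mul_pow]
  have hDsq := (memLp_two_iff_integrable_sq_norm hD.1).1 hD
  rw [← integral_const_mul]
  calc ∫ ω, lam ^ 2 * ‖D ω - μ • H ω‖ ^ 2 ∂P
      ≤ ∫ ω, (lam * ‖D ω‖ ^ 2 + lam ^ 2 / (1 - lam) * (μ * B) ^ 2) ∂P :=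
        integral_mono (((memLp_two_iff_integrable_sq_norm hDH.1).1 hDH).const_mul _)
          ((hDsq.const_mul _).add (integrable_const _)) hpt
    _ = lam * ∫ ω, ‖D ω‖ ^ 2 ∂P + lam ^ 2 / (1 - lam) * (μ * B) ^ 2 := by
        rw [integral_add (hDsq.const_mul _) (integrable_const _), integral_const_mul,
          integral_const, probReal_univ, one_smul]

theorem sum_integral_norm_sq_deviation_step_le {Ω ι n : Type*} [Fintype ι] [DecidableEq ι]
    [Fintype n] {m m0 : MeasurableSpace Ω} {P : Measure[m0] Ω} [IsProbabilityMeasure P]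
    (hm : m ≤ m0) {A : Matrix ι ι ℝ} (hrow : ∀ l, ∑ k, A l k = 1) (hcol : ∀ k, ∑ l, A l k = 1)
    {lam : ℝ} (hlam : ‖toEuclideanCLM (𝕜 := ℝ)
      (Aᵀ - (Fintype.card ι : ℝ)⁻¹ • of fun _ _ => (1 : ℝ) : Matrix ι ι ℝ)‖ ≤ lam)
    (hlam1 : lam < 1) {x g H : ι → Ω → EuclideanSpace ℝ n} {Bh C : ℝ}
    (hx : ∀ l, StronglyMeasurable[m] (x l))
    (hdev : ∀ l, MemLp (fun ω => deviation (x · ω) l) 2 P)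
    (hH : ∀ l, StronglyMeasurable[m] (H l)) (hHB : ∀ l ω, ‖H l ω‖ ≤ Bh)
    (hg : ∀ l, Integrable (g l) P) (hgH : ∀ l, P[g l|m] =ᵐ[P] H l)
    (hgH2 : ∀ l, Integrable (fun ω => ‖g l ω - H l ω‖ ^ 2) P)
    (hvar : ∀ l, ∀ᵐ ω ∂P, (P[fun ω' => ‖g l ω' - H l ω'‖ ^ 2|m]) ω ≤ C ^ 2) (μ : ℝ) :
    ∑ k, ∫ ω, ‖deviation (fun k => ∑ l, A l k • (x l ω - μ • g l ω)) k‖ ^ 2 ∂P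
      ≤ lam * ∑ k, ∫ ω, ‖deviation (x · ω) k‖ ^ 2 ∂P
        + μ ^ 2 * lam ^ 2 * Fintype.card ι * (Bh ^ 2 + C ^ 2) / (1 - lam) := by
  set Bm : Matrix ι ι ℝ := Aᵀ - (Fintype.card ι : ℝ)⁻¹ • of fun _ _ => (1 : ℝ)
  have hlam0 : 0 ≤ lam := (norm_nonneg _).trans hlam
  have hH2 : ∀ l, MemLp (H l) 2 P := fun l =>
    .of_bound ((hH l).mono hm).aestronglyMeasurable Bh (.of_forall (hHB l))
  have hξ2 : ∀ l, MemLp (g l - H l) 2 P := fun l =>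
    (memLp_two_iff_integrable_sq_norm ((hg l).1.sub (hH2 l).1)).2 (hgH2 l)
  have hξ0 : ∀ l, P[g l - H l|m] =ᵐ[P] 0 := fun l =>
    condExp_sub_ae_eq_zero hm (hg l) (hH l) ((hH2 l).integrable one_le_two) (hgH l)
  have hsplit : ∀ k ω, deviation (fun k => ∑ l, A l k • (x l ω - μ • g l ω)) k
      = ∑ l, Bm k l • ((deviation (x · ω) l - μ • H l ω) - μ • (g l ω - H l ω)) := fun k ω => by
    rw [deviation_sum_smul_sub_smul_eq hrow hcol]
    congr! 2
    module
  have hdrift : lam ^ 2 * ∑ l, ∫ ω, ‖deviation (x · ω) l - μ • H l ω‖ ^ 2 ∂P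
      ≤ lam * ∑ k, ∫ ω, ‖deviation (x · ω) k‖ ^ 2 ∂P
        + Fintype.card ι * (lam ^ 2 / (1 - lam) * (μ * Bh) ^ 2) := by
    rw [Finset.mul_sum, Finset.mul_sum, ← nsmul_eq_mul, ← Finset.card_univ, ← Finset.sum_const,
      ← Finset.sum_add_distrib]
    exact Finset.sum_le_sum fun l _ => integral_norm_sq_sub_smul_le_of_norm_le hlam0 hlam1
      (hdev l) ((hH l).mono hm).aestronglyMeasurable (hHB l) μ
  have hnoise : lam ^ 2 * (μ ^ 2 * ∑ l, ∫ ω, ‖g l ω - H l ω‖ ^ 2 ∂P)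
      ≤ lam ^ 2 * μ ^ 2 * Fintype.card ι * C ^ 2 / (1 - lam) := by
    have hsum : ∑ l, ∫ ω, ‖g l ω - H l ω‖ ^ 2 ∂P ≤ ∑ _l : ι, C ^ 2 :=
      Finset.sum_le_sum fun l _ => integral_le_of_ae_condExp_le hm (hvar l)
    rw [Finset.sum_const, Finset.card_univ, nsmul_eq_mul] at hsum
    calc _ ≤ lam ^ 2 * μ ^ 2 * Fintype.card ι * C ^ 2 := by
          rw [mul_assoc _ _ (C ^ 2), ← mul_assoc]
          gcongr
      _ ≤ _ := le_div_self (by positivity) (by linarith) (by linarith)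
  simp_rw [hsplit]
  calc _ ≤ ‖toEuclideanCLM (𝕜 := ℝ) Bm‖ ^ 2
          * (∑ l, ∫ ω, ‖deviation (x · ω) l - μ • H l ω‖ ^ 2 ∂P
            + μ ^ 2 * ∑ l, ∫ ω, ‖g l ω - H l ω‖ ^ 2 ∂P) :=
        sum_integral_norm_sq_sum_smul_sub_smul_le hm Bm
          (fun l => (stronglyMeasurable_deviation hx l).sub ((hH l).fun_const_smul μ))
          (fun l => (hdev l).sub ((hH2 l).const_smul μ)) hξ2 hξ0 μ
    _ ≤ lam ^ 2 * (∑ l, ∫ ω, ‖deviation (x · ω) l - μ • H l ω‖ ^ 2 ∂P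
          + μ ^ 2 * ∑ l, ∫ ω, ‖g l ω - H l ω‖ ^ 2 ∂P) := by gcongr
    _ ≤ _ := by
        rw [mul_add]
        refine (add_le_add hdrift hnoise).trans_eq ?_
        field_simp
        ring

theorem disagreement_perturbation_bound_general
    (K M : ℕ) (μ Bhat C Lhat lam2 : ℝ)
    (A : Matrix (Fin K) (Fin K) ℝ)
    (hA_row : ∀ k, ∑ l, A k l = 1)
    (hA_col : ∀ l, ∑ k, A k l = 1)
    (hlam : lam2 = ‖Matrix.toEuclideanCLM (𝕜 := ℝ)
      ((Aᵀ - (K : ℝ)⁻¹ • Matrix.of (fun _ _ => (1 : ℝ))) : Matrix (Fin K) (Fin K) ℝ)‖)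
    (hlam_lt : lam2 < 1)
    {Ω : Type*} [MeasurableSpace Ω] (P : Measure Ω) [IsProbabilityMeasure P]
    (W : ℕ → Fin K → Ω → EuclideanSpace ℝ (Fin M))
    (g : ℕ → Fin K → Ω → EuclideanSpace ℝ (Fin M))
    (W0 : Fin K → EuclideanSpace ℝ (Fin M))
    (h : Fin K → EuclideanSpace ℝ (Fin M) → EuclideanSpace ℝ (Fin M))
    (F : ℕ → MeasurableSpace Ω)
    (hF : ∀ i, F i = ⨆ (k : Fin K) (j : ℕ) (_ : j ≤ i),
      MeasurableSpace.comap (W j k) inferInstance)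
    (hW0 : ∀ k ω, W 0 k ω = W0 k)
    (hWmeas : ∀ i k, Measurable (W i k))
    (hhmeas : ∀ k, Measurable (h k))
    (hhbound : ∀ k u, ‖h k u‖ ≤ Bhat)
    (hhlip : ∀ k u v, ‖h k u - h k v‖ ≤ Lhat * ‖u - v‖)
    (hg_unbiased : ∀ i k,
      P[g (i + 1) k | F i] =ᵐ[P] fun ω => h k (W i k ω))
    (hg_var : ∀ i k, ∀ᵐ ω ∂P,
      (P[fun ω' => ‖g (i + 1) k ω' - h k (W i k ω')‖ ^ 2 | F i]) ω ≤ C ^ 2)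
    (hrec : ∀ i k ω, W (i + 1) k ω = ∑ l, A l k • (W i l ω - μ • g (i + 1) l ω))
    (hWint : ∀ i k, Integrable (fun ω =>
      ‖W i k ω - (K : ℝ)⁻¹ • ∑ j, W i j ω‖ ^ 2) P)
    (hgint : ∀ i k, Integrable (g i k) P)
    (hgint2 : ∀ i k, Integrable (fun ω => ‖g (i + 1) k ω - h k (W i k ω)‖ ^ 2) P) :
    ∀ i, ∫ ω, ‖(K : ℝ)⁻¹ • ∑ k, (h k (W i k ω) - h k ((K : ℝ)⁻¹ • ∑ j, W i j ω))‖ ^ 2 ∂P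
      ≤ (Lhat ^ 2 / K) * (lam2 ^ i * ∑ k, ‖W0 k - (K : ℝ)⁻¹ • ∑ j, W0 j‖ ^ 2
        + μ ^ 2 * (lam2 ^ 2 / (1 - lam2) ^ 2) * K * (Bhat ^ 2 + C ^ 2)) := by
  have hFle : ∀ i, F i ≤ ‹MeasurableSpace Ω› := fun i => by
    rw [hF i]
    exact iSup_le fun k => iSup₂_le fun j _ => (hWmeas j k).comap_le
  have hWF : ∀ i k, StronglyMeasurable[F i] (W i k) := fun i k =>
    (Measurable.of_comap_le <| hF i ▸ le_iSup_of_le k (le_iSup₂_of_le i le_rfl le_rfl))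
      |>.stronglyMeasurable
  have hhWF : ∀ i k, StronglyMeasurable[F i] (fun ω => h k (W i k ω)) := fun i k =>
    ((hhmeas k).comp (hWF i k).measurable).stronglyMeasurable
  have hdev : ∀ i k, MemLp (fun ω => deviation (W i · ω) k) 2 P := fun i k =>
    (memLp_two_iff_integrable_sq_norm ((stronglyMeasurable_deviation (hWF i) k).mono
      (hFle i)).aestronglyMeasurable).2 (by simpa [deviation] using hWint i k)
  set S : ℕ → ℝ := fun i => ∑ k, ∫ ω, ‖deviation (W i · ω) k‖ ^ 2 ∂P with hS
  have hstep : ∀ i, S (i + 1)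
      ≤ lam2 * S i + μ ^ 2 * lam2 ^ 2 * K * (Bhat ^ 2 + C ^ 2) / (1 - lam2) := fun i => by
    simpa [hS, hrec] using sum_integral_norm_sq_deviation_step_le (hFle i) hA_row hA_col
      (by rw [Fintype.card_fin, ← hlam]) hlam_lt (hWF i) (hdev i) (hhWF i)
      (fun k _ => hhbound k _) (hgint (i + 1)) (hg_unbiased i) (hgint2 i) (hg_var i) μ
  have hS0 : S 0 = ∑ k, ‖W0 k - (K : ℝ)⁻¹ • ∑ j, W0 j‖ ^ 2 := by simp [hS, deviation, hW0]
  intro i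
  calc _ ≤ Lhat ^ 2 / K * S i := by
        simpa [hS, deviation] using integral_norm_sq_inv_card_smul_sum_sub_le hhlip (hdev i)
    _ ≤ _ := by
        gcongr
        calc S i ≤ lam2 ^ i * S 0
              + μ ^ 2 * lam2 ^ 2 * K * (Bhat ^ 2 + C ^ 2) / (1 - lam2) / (1 - lam2) :=
              le_pow_mul_add_div_of_le_mul_add (hlam ▸ norm_nonneg _) hlam_lt
                (div_nonneg (by positivity) (sub_nonneg.2 hlam_lt.le)) hstep i
          _ = _ := by rw [hS0]; field_simp

/-- **Disagreement-perturbation bound (first half of Lemma 8 of Dif-MAML).**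
With `d_i = (1/K) Σ_k (h_k(𝒲_{k,i}) − h_k(w_{c,i}))`, for every `i`,
`E‖d_i‖² ≤ (L̂²/K)[λ₂^i Σ_k‖𝒲_{k,0} − w_{c,0}‖² + μ²(λ₂²/(1−λ₂)²) K (B̂² + C²)]`. -/
theorem disagreement_perturbation_bound
    (K M : ℕ) (hK : 0 < K) (μ Bhat C Lhat lam2 : ℝ)
    (hμ : 0 < μ) (hBhat : 0 < Bhat) (hC : 0 < C) (hLhat : 0 < Lhat)
    (A : Matrix (Fin K) (Fin K) ℝ)
    (hA_nonneg : ∀ k l, 0 ≤ A k l)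
    (hA_row : ∀ k, ∑ l, A k l = 1)
    (hA_col : ∀ l, ∑ k, A k l = 1)
    (hlam : lam2 = ‖Matrix.toEuclideanCLM (𝕜 := ℝ)
      ((Aᵀ - (K : ℝ)⁻¹ • Matrix.of (fun _ _ => (1 : ℝ))) : Matrix (Fin K) (Fin K) ℝ)‖)
    (hlam_pos : 0 < lam2) (hlam_lt : lam2 < 1)
    {Ω : Type*} [MeasurableSpace Ω] (P : Measure Ω) [IsProbabilityMeasure P]
    (W : ℕ → Fin K → Ω → EuclideanSpace ℝ (Fin M))
    (g : ℕ → Fin K → Ω → EuclideanSpace ℝ (Fin M))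
    (W0 : Fin K → EuclideanSpace ℝ (Fin M))
    (h : Fin K → EuclideanSpace ℝ (Fin M) → EuclideanSpace ℝ (Fin M))
    (F : ℕ → MeasurableSpace Ω)
    (hF : ∀ i, F i = ⨆ (k : Fin K) (j : ℕ) (_ : j ≤ i),
      MeasurableSpace.comap (W j k) inferInstance)
    (hW0 : ∀ k ω, W 0 k ω = W0 k)
    (hWmeas : ∀ i k, Measurable (W i k))
    (hgmeas : ∀ i k, Measurable (g i k))
    (hhmeas : ∀ k, Measurable (h k))
    (hhbound : ∀ k u, ‖h k u‖ ≤ Bhat)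
    (hhlip : ∀ k u v, ‖h k u - h k v‖ ≤ Lhat * ‖u - v‖)
    (hg_unbiased : ∀ i k,
      P[g (i + 1) k | F i] =ᵐ[P] fun ω => h k (W i k ω))
    (hg_var : ∀ i k, ∀ᵐ ω ∂P,
      (P[fun ω' => ‖g (i + 1) k ω' - h k (W i k ω')‖ ^ 2 | F i]) ω ≤ C ^ 2)
    (hrec : ∀ i k ω, W (i + 1) k ω = ∑ l, A l k • (W i l ω - μ • g (i + 1) l ω))
    (hWint : ∀ i k, Integrable (fun ω =>
      ‖W i k ω - (K : ℝ)⁻¹ • ∑ j, W i j ω‖ ^ 2) P)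
    (hgint : ∀ i k, Integrable (g i k) P)
    (hgint2 : ∀ i k, Integrable (fun ω => ‖g (i + 1) k ω - h k (W i k ω)‖ ^ 2) P)
    (hdint : ∀ i, Integrable (fun ω =>
      ‖(K : ℝ)⁻¹ • ∑ k, (h k (W i k ω) - h k ((K : ℝ)⁻¹ • ∑ j, W i j ω))‖ ^ 2) P) :
    ∀ i, ∫ ω, ‖(K : ℝ)⁻¹ • ∑ k, (h k (W i k ω) - h k ((K : ℝ)⁻¹ • ∑ j, W i j ω))‖ ^ 2 ∂P
      ≤ (Lhat ^ 2 / K) * (lam2 ^ i * ∑ k, ‖W0 k - (K : ℝ)⁻¹ • ∑ j, W0 j‖ ^ 2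
        + μ ^ 2 * (lam2 ^ 2 / (1 - lam2) ^ 2) * K * (Bhat ^ 2 + C ^ 2)) :=
  disagreement_perturbation_bound_general K M μ Bhat C Lhat lam2 A hA_row hA_col hlam hlam_lt P W g
    W0 h F hF hW0 hWmeas hhmeas hhbound hhlip hg_unbiased hg_var hrec hWint hgint hgint2
end

section
/- E[ Ĵ(w⁺) ] ≤ Ĵ(w) − (μ/2)(1 − 2μL̂) ‖∇Ĵ(w)‖² + (μ/2)(1 + 2μL̂) ‖d‖² + μ² (L̂/2) ς². (This is the descent relation of the paper's Lemma 9 for the centroid iterate under perturbed stochastic gradient descent, stated with all constants explicit.) -/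
/-! For an `L`-smooth function the descent lemma `f (x + v) ≤ f x + ⟪∇f x, v⟫ + L/2 ‖v‖²` holds
pointwise; integrating it along the random step `v = -μ (∇Ĵ w + d + s)` and using `E s = 0`
leaves `Ĵ w - μ ⟪∇Ĵ w, ∇Ĵ w + d⟫ + L̂/2 μ² (‖∇Ĵ w + d‖² + E ‖s‖²)`. Young's inequality on
`⟪∇Ĵ w, d⟫` and `‖∇Ĵ w + d‖² ≤ 2 ‖∇Ĵ w‖² + 2 ‖d‖²` produce the constants `1 ∓ 2 μ L̂`. -/
open MeasureTheory InnerProductSpace Set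

section Descent

variable {F : Type*} [NormedAddCommGroup F] [InnerProductSpace ℝ F] [CompleteSpace F]
  {f : F → ℝ} {L : ℝ}

theorem le_add_inner_gradient_add_of_lipschitz_gradient (hf : Differentiable ℝ f)
    (hlip : ∀ u v, ‖gradient f u - gradient f v‖ ≤ L * ‖u - v‖) (x v : F) :
    f (x + v) ≤ f x + ⟪gradient f x, v⟫_ℝ + L / 2 * ‖v‖ ^ 2 := by
  set φ : ℝ → ℝ := fun t => f (x + t • v) - f x - t * ⟪gradient f x, v⟫_ℝ
  set B : ℝ → ℝ := fun t => L / 2 * t ^ 2 * ‖v‖ ^ 2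
  have hφ (t : ℝ) : HasDerivAt φ ⟪gradient f (x + t • v) - gradient f x, v⟫_ℝ t := by
    have hline : HasDerivAt (fun t : ℝ => x + t • v) v t := by
      simpa using ((hasDerivAt_id t).smul_const v).const_add x
    have := (((hf (x + t • v)).hasGradientAt.hasFDerivAt.comp_hasDerivAt t hline).sub_const
      (f x)).sub (hasDerivAt_mul_const ⟪gradient f x, v⟫_ℝ)
    exact this.congr_deriv (by simp [inner_sub_left])
  have hB (t : ℝ) : HasDerivAt B (L * t * ‖v‖ ^ 2) t :=
    (((hasDerivAt_pow 2 t).const_mul (L / 2)).mul_const (‖v‖ ^ 2)).congr_deriv (by ring)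
  have hbound : ∀ t ∈ Ico (0 : ℝ) 1,
      ⟪gradient f (x + t • v) - gradient f x, v⟫_ℝ ≤ L * t * ‖v‖ ^ 2 := by
    intro t ht
    calc ⟪gradient f (x + t • v) - gradient f x, v⟫_ℝ
        ≤ ‖gradient f (x + t • v) - gradient f x‖ * ‖v‖ := real_inner_le_norm _ _
      _ ≤ L * ‖t • v‖ * ‖v‖ := by gcongr; simpa using hlip (x + t • v) x
      _ = L * t * ‖v‖ ^ 2 := by rw [norm_smul, Real.norm_of_nonneg ht.1]; ring
  have h1 : φ 1 ≤ B 1 :=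
    image_le_of_deriv_right_le_deriv_boundary (fun t _ => (hφ t).continuousAt.continuousWithinAt)
      (fun t _ => (hφ t).hasDerivWithinAt) (by simp [φ, B])
      (fun t _ => (hB t).continuousAt.continuousWithinAt) (fun t _ => (hB t).hasDerivWithinAt)
      hbound (right_mem_Icc.2 zero_le_one)
  simp only [φ, B, one_smul, one_mul, one_pow, mul_one] at h1
  linarith

theorem integral_comp_sub_smul_le_of_lipschitz_gradient {Ω : Type*} [MeasurableSpace Ω]
    {P : Measure Ω} [IsProbabilityMeasure P] (hf : Differentiable ℝ f)
    (hlip : ∀ u v, ‖gradient f u - gradient f v‖ ≤ L * ‖u - v‖) (x : F) (μ : ℝ) {v : Ω → F}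
    (hv : Integrable v P) (hv_sq : Integrable (fun ω => ‖v ω‖ ^ 2) P)
    (hfv : Integrable (fun ω => f (x - μ • v ω)) P) :
    ∫ ω, f (x - μ • v ω) ∂P
      ≤ f x - μ * ⟪gradient f x, ∫ ω, v ω ∂P⟫_ℝ + L / 2 * μ ^ 2 * ∫ ω, ‖v ω‖ ^ 2 ∂P := by
  have hstep (ω : Ω) : f (x - μ • v ω)
      ≤ f x - μ * ⟪gradient f x, v ω⟫_ℝ + L / 2 * μ ^ 2 * ‖v ω‖ ^ 2 := by
    have := le_add_inner_gradient_add_of_lipschitz_gradient hf hlip x (-(μ • v ω))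
    rwa [← sub_eq_add_neg, inner_neg_right, real_inner_smul_right, norm_neg, norm_smul,
      mul_pow, Real.norm_eq_abs, sq_abs, ← sub_eq_add_neg, ← mul_assoc] at this
  have hinner : Integrable (fun ω => μ * ⟪gradient f x, v ω⟫_ℝ) P :=
    (hv.const_inner _).const_mul μ
  have hsq : Integrable (fun ω => L / 2 * μ ^ 2 * ‖v ω‖ ^ 2) P := hv_sq.const_mul _
  have hbound : Integrable
      (fun ω => f x - μ * ⟪gradient f x, v ω⟫_ℝ + L / 2 * μ ^ 2 * ‖v ω‖ ^ 2) P :=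
    ((integrable_const _).sub hinner).add hsq
  refine (integral_mono hfv hbound hstep).trans_eq ?_
  rw [integral_add, integral_sub, integral_const, integral_const_mul, integral_const_mul,
    integral_inner hv]
  · simp
  exacts [integrable_const _, hinner, (integrable_const _).sub hinner, hsq]

end Descent

section SecondMoment

variable {E : Type*} [NormedAddCommGroup E] [InnerProductSpace ℝ E]
  {Ω : Type*} [MeasurableSpace Ω] {P : Measure Ω} [IsProbabilityMeasure P] {s : Ω → E}

theorem integrable_norm_const_add_sq (a : E) (hs : Integrable s P)
    (hs_sq : Integrable (fun ω => ‖s ω‖ ^ 2) P) :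
    Integrable (fun ω => ‖a + s ω‖ ^ 2) P := by
  simp_rw [norm_add_sq_real]
  exact ((integrable_const _).add ((hs.const_inner a).const_mul 2)).add hs_sq

theorem integral_norm_const_add_sq_of_integral_eq_zero [CompleteSpace E] (a : E) (hs : Integrable s P)
    (hs_sq : Integrable (fun ω => ‖s ω‖ ^ 2) P) (hs_mean : ∫ ω, s ω ∂P = 0) :
    ∫ ω, ‖a + s ω‖ ^ 2 ∂P = ‖a‖ ^ 2 + ∫ ω, ‖s ω‖ ^ 2 ∂P := by
  simp_rw [norm_add_sq_real]
  rw [integral_add, integral_add, integral_const_mul, integral_inner hs, hs_mean]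
  · simp
  exacts [integrable_const _, (hs.const_inner a).const_mul 2,
    (integrable_const _).add ((hs.const_inner a).const_mul 2), hs_sq]

end SecondMoment

theorem neg_inner_add_norm_add_sq_le {E : Type*} [NormedAddCommGroup E] [InnerProductSpace ℝ E]
    {μ L : ℝ} (hμ : 0 ≤ μ) (hL : 0 ≤ L) (g d : E) :
    -μ * ⟪g, g + d⟫_ℝ + L / 2 * μ ^ 2 * ‖g + d‖ ^ 2
      ≤ -(μ / 2) * (1 - 2 * μ * L) * ‖g‖ ^ 2 + (μ / 2) * (1 + 2 * μ * L) * ‖d‖ ^ 2 := by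
  have hcross : -(2 * ⟪g, d⟫_ℝ) ≤ ‖g‖ ^ 2 + ‖d‖ ^ 2 := by
    linarith [norm_add_sq_real g d, sq_nonneg ‖g + d‖]
  have hsum : ‖g + d‖ ^ 2 ≤ 2 * ‖g‖ ^ 2 + 2 * ‖d‖ ^ 2 := by
    linarith [norm_add_sq_real g d, norm_sub_sq_real g d, sq_nonneg ‖g - d‖]
  rw [inner_add_right, real_inner_self_eq_norm_sq]
  linarith [mul_le_mul_of_nonneg_left hcross hμ,
    mul_le_mul_of_nonneg_left hsum (by positivity : 0 ≤ L / 2 * μ ^ 2)]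

theorem centroid_descent_relation_general
    (M : ℕ) (μ Lhat ς : ℝ) (hμ : 0 < μ) (hLhat : 0 < Lhat)
    (Jhat : EuclideanSpace ℝ (Fin M) → ℝ)
    (hdiff : Differentiable ℝ Jhat)
    (hlip : ∀ u v, ‖gradient Jhat u - gradient Jhat v‖ ≤ Lhat * ‖u - v‖)
    (w d : EuclideanSpace ℝ (Fin M))
    {Ω : Type*} [MeasurableSpace Ω] (P : Measure Ω) [IsProbabilityMeasure P]
    (s : Ω → EuclideanSpace ℝ (Fin M))
    (hsint : Integrable s P)
    (hsmean : ∫ ω, s ω ∂P = 0)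
    (hsvar_int : Integrable (fun ω => ‖s ω‖ ^ 2) P)
    (hsvar : ∫ ω, ‖s ω‖ ^ 2 ∂P ≤ ς ^ 2)
    (hJint : Integrable (fun ω => Jhat (w - μ • (gradient Jhat w + d + s ω))) P) :
    ∫ ω, Jhat (w - μ • (gradient Jhat w + d + s ω)) ∂P
      ≤ Jhat w - (μ / 2) * (1 - 2 * μ * Lhat) * ‖gradient Jhat w‖ ^ 2
        + (μ / 2) * (1 + 2 * μ * Lhat) * ‖d‖ ^ 2
        + μ ^ 2 * (Lhat / 2) * ς ^ 2 := by
  set g := gradient Jhat w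
  have hmean : ∫ ω, (g + d + s ω) ∂P = g + d := by
    rw [integral_add (integrable_const _) hsint, hsmean]
    simp
  have hdescent := integral_comp_sub_smul_le_of_lipschitz_gradient hdiff hlip w μ
    (v := fun ω => g + d + s ω) ((integrable_const (g + d)).add hsint)
    (integrable_norm_const_add_sq (g + d) hsint hsvar_int) hJint
  rw [hmean, integral_norm_const_add_sq_of_integral_eq_zero (g + d) hsint hsvar_int hsmean]
    at hdescent
  linarith [neg_inner_add_norm_add_sq_le hμ.le hLhat.le g d,
    mul_le_mul_of_nonneg_left hsvar (by positivity : 0 ≤ Lhat / 2 * μ ^ 2)]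

/-- **Descent relation for the centroid iterate (Lemma 9 of Dif-MAML).**
For `w⁺ = w − μ(∇Ĵ(w) + d + s)` with `E s = 0` and `E‖s‖² ≤ ς²`,
`E[Ĵ(w⁺)] ≤ Ĵ(w) − (μ/2)(1 − 2μL̂)‖∇Ĵ(w)‖² + (μ/2)(1 + 2μL̂)‖d‖² + μ²(L̂/2)ς²`. -/
theorem centroid_descent_relation
    (M : ℕ) (μ Lhat ς : ℝ) (hμ : 0 < μ) (hLhat : 0 < Lhat) (hς : 0 < ς)
    (Jhat : EuclideanSpace ℝ (Fin M) → ℝ)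
    (hdiff : Differentiable ℝ Jhat)
    (hlip : ∀ u v, ‖gradient Jhat u - gradient Jhat v‖ ≤ Lhat * ‖u - v‖)
    (w d : EuclideanSpace ℝ (Fin M))
    {Ω : Type*} [MeasurableSpace Ω] (P : Measure Ω) [IsProbabilityMeasure P]
    (s : Ω → EuclideanSpace ℝ (Fin M))
    (hsint : Integrable s P)
    (hsmean : ∫ ω, s ω ∂P = 0)
    (hsvar_int : Integrable (fun ω => ‖s ω‖ ^ 2) P)
    (hsvar : ∫ ω, ‖s ω‖ ^ 2 ∂P ≤ ς ^ 2)
    (hJint : Integrable (fun ω => Jhat (w - μ • (gradient Jhat w + d + s ω))) P) :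
    ∫ ω, Jhat (w - μ • (gradient Jhat w + d + s ω)) ∂P
      ≤ Jhat w - (μ / 2) * (1 - 2 * μ * Lhat) * ‖gradient Jhat w‖ ^ 2
        + (μ / 2) * (1 + 2 * μ * Lhat) * ‖d‖ ^ 2
        + μ ^ 2 * (Lhat / 2) * ς ^ 2 :=
  centroid_descent_relation_general M μ Lhat ς hμ hLhat Jhat hdiff hlip w d P s hsint hsmean
    hsvar_int hsvar hJint
end

section
/- There exists an index i* ∈ ℕ with i* ≤ (f(w_0) − f°)/(c₂ μ²) such that E ‖∇f(w_{i*})‖² ≤ 2μ c₂ / c₁. (This is the paper's Theorem 2 in its abstract form: under a per-iteration descent relation with drift constant c₂ = O(1) and gradient coefficient c₁, the iterates reach an O(μ)-mean-square-stationary point of f in at most O(1/μ²) iterations.) -/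
/-!
Suppose every iterate up to `(f(w₀) − f°)/(c₂μ²)` had `E‖∇f(w_i)‖² > 2μc₂/c₁`. Then the
gradient term in the descent relation outweighs twice the drift, so each step lowers `E f(w_i)`
by at least `μ²c₂`; after `⌊(f(w₀) − f°)/(c₂μ²)⌋ + 1` steps the expectation would drop below the
lower bound `f°`.
-/

open MeasureTheory

theorem le_sub_mul_of_forall_lt_le_sub {a : ℕ → ℝ} {δ : ℝ} {n : ℕ}
    (h : ∀ i < n, a (i + 1) ≤ a i - δ) : a n ≤ a 0 - n * δ := by
  induction n with
  | zero => simp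
  | succ k ih =>
    have hk := ih fun i hi => h i (hi.trans k.lt_succ_self)
    have hstep := h k k.lt_succ_self
    push_cast
    linarith

theorem exists_le_div_of_descent {a g : ℕ → ℝ} {α β L : ℝ} (hα : 0 < α) (hβ : 0 < β)
    (hlow : ∀ i, L ≤ a i) (hdesc : ∀ i, a (i + 1) ≤ a i - α * g i + β) :
    ∃ i : ℕ, (i : ℝ) ≤ (a 0 - L) / β ∧ g i ≤ 2 * β / α := by
  by_contra! hlarge
  set B := (a 0 - L) / β
  have hB : 0 ≤ B := div_nonneg (by linarith [hlow 0]) hβ.le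
  have hstep : ∀ i < ⌊B⌋₊ + 1, a (i + 1) ≤ a i - β := by
    intro i hi
    have hiB : (i : ℝ) ≤ B :=
      (Nat.cast_le.mpr (Nat.lt_succ_iff.mp hi)).trans (Nat.floor_le hB)
    have hg : 2 * β < α * g i := (div_lt_iff₀' hα).mp (hlarge i hiB)
    linarith [hdesc i]
  have hdrop := le_sub_mul_of_forall_lt_le_sub hstep
  have hN : a 0 - L < ((⌊B⌋₊ + 1 : ℕ) : ℝ) * β := by
    rw [← div_lt_iff₀ hβ]
    exact_mod_cast Nat.lt_floor_add_one B
  linarith [hlow (⌊B⌋₊ + 1)]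

theorem stationary_point_in_O_mu_sq_iterations_general
    (M : ℕ) (μ c₁ c₂ flow : ℝ) (hμ : 0 < μ) (hc₁ : 0 < c₁) (hc₂ : 0 < c₂)
    (f : EuclideanSpace ℝ (Fin M) → ℝ)
    (hbelow : ∀ u, flow ≤ f u)
    {Ω : Type*} [MeasurableSpace Ω] (P : Measure Ω) [IsProbabilityMeasure P]
    (w : ℕ → Ω → EuclideanSpace ℝ (Fin M)) (w0 : EuclideanSpace ℝ (Fin M))
    (hw0 : ∀ ω, w 0 ω = w0)
    (hfint : ∀ i, Integrable (fun ω => f (w i ω)) P)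
    (hdescent : ∀ i, ∫ ω, f (w (i + 1) ω) ∂P
      ≤ (∫ ω, f (w i ω) ∂P) - μ * c₁ * (∫ ω, ‖gradient f (w i ω)‖ ^ 2 ∂P) + μ ^ 2 * c₂) :
    ∃ istar : ℕ, (istar : ℝ) ≤ (f w0 - flow) / (c₂ * μ ^ 2)
      ∧ ∫ ω, ‖gradient f (w istar ω)‖ ^ 2 ∂P ≤ 2 * μ * c₂ / c₁ := by
  have hlow : ∀ i, flow ≤ ∫ ω, f (w i ω) ∂P := fun i => by
    simpa using integral_mono (integrable_const flow) (hfint i) fun ω => hbelow (w i ω)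
  obtain ⟨i, hi, hgrad⟩ :=
    exists_le_div_of_descent (mul_pos hμ hc₁) (by positivity : 0 < μ ^ 2 * c₂) hlow hdescent
  refine ⟨i, ?_, ?_⟩
  · simpa [hw0, mul_comm] using hi
  · convert hgrad using 1
    field_simp

/-- **Reaching an O(μ)-mean-square-stationary point (Theorem 2 of Dif-MAML, abstract form).**
Under a per-iteration descent relation, there is an index `i* ≤ (f(w₀) − f°)/(c₂ μ²)` with
`E‖∇f(w_{i*})‖² ≤ 2μc₂/c₁`. -/
theorem stationary_point_in_O_mu_sq_iterations
    (M : ℕ) (μ c₁ c₂ flow : ℝ) (hμ : 0 < μ) (hc₁ : 0 < c₁) (hc₂ : 0 < c₂)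
    (f : EuclideanSpace ℝ (Fin M) → ℝ)
    (hdiff : Differentiable ℝ f)
    (hbelow : ∀ u, flow ≤ f u)
    {Ω : Type*} [MeasurableSpace Ω] (P : Measure Ω) [IsProbabilityMeasure P]
    (w : ℕ → Ω → EuclideanSpace ℝ (Fin M)) (w0 : EuclideanSpace ℝ (Fin M))
    (hw0 : ∀ ω, w 0 ω = w0)
    (hfint : ∀ i, Integrable (fun ω => f (w i ω)) P)
    (hgint : ∀ i, Integrable (fun ω => ‖gradient f (w i ω)‖ ^ 2) P)
    (hdescent : ∀ i, ∫ ω, f (w (i + 1) ω) ∂P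
      ≤ (∫ ω, f (w i ω) ∂P) - μ * c₁ * (∫ ω, ‖gradient f (w i ω)‖ ^ 2 ∂P) + μ ^ 2 * c₂) :
    ∃ istar : ℕ, (istar : ℝ) ≤ (f w0 - flow) / (c₂ * μ ^ 2)
      ∧ ∫ ω, ‖gradient f (w istar ω)‖ ^ 2 ∂P ≤ 2 * μ * c₂ / c₁ :=
  stationary_point_in_O_mu_sq_iterations_general M μ c₁ c₂ flow hμ hc₁ hc₂ f hbelow P w w0 hw0 hfint
    hdescent
end
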